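/- arXiv:1310.6113 — 6 statements merged into one kernel-verified Lean document; each statement's English description precedes it below -/
import Mathlib

section
/- For integers n₁, n₂ ≥ 1, n = n₁ + n₂, 1 ≤ a ≤ n₁ and 0 ≤ b ≤ n₂ − 1, in the bipartite complete game with minimum G(n₁,n₂,a,b) the number c₁ of swings of any player of type 1 equals Σ_{i=b+1}^{n₂} C(n₁−1, a−1)·C(n₂, i) + Σ_{i=0}^{min(b, n₁−a)} C(n₁−1, a+i−1)·C(n₂, b−i), where C(·,·) denotes the binomial coefficient. -/
open Finset

/-- Winning predicate of the bipartite complete game with minimum `G(n₁,n₂,a,b)` on the player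
set `Fin (n₁ + n₂)`, where the players `i < n₁` are of type 1 and the remaining ones of type 2:
a coalition `S` is winning iff `|S ∩ T₁| ≥ a` and `|S| ≥ a + b`. -/
def BipWinning (n1 n2 a b : ℕ) (S : Finset (Fin (n1 + n2))) : Prop :=
  a ≤ (S.filter fun i : Fin (n1 + n2) => (i : ℕ) < n1).card ∧ a + b ≤ S.card

/-- The number of swings of player `i`: coalitions `S` with `i ∈ S`, `S` winning and
`S ∖ {i}` losing. -/
noncomputable def swingCount {n : ℕ} (Win : Finset (Fin n) → Prop) (i : Fin n) : ℕ :=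
  Set.ncard {S : Finset (Fin n) | i ∈ S ∧ Win S ∧ ¬ Win (S.erase i)}

/-- The number of swings of player `i` of cardinality `s`. -/
noncomputable def swingCountCard {n : ℕ} (Win : Finset (Fin n) → Prop) (i : Fin n) (s : ℕ) : ℕ :=
  Set.ncard {S : Finset (Fin n) | S.card = s ∧ i ∈ S ∧ Win S ∧ ¬ Win (S.erase i)}

/-- The Shapley–Shubik power index of player `i`:
`SS_i = Σ_{s=1}^{n} ((s-1)!(n-s)!/n!) · c_i^s`. -/
noncomputable def SSindex {n : ℕ} (Win : Finset (Fin n) → Prop) (i : Fin n) : ℚ :=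
  ∑ s ∈ Finset.Icc 1 n,
    ((Nat.factorial (s - 1) : ℚ) * (Nat.factorial (n - s) : ℚ) / (Nat.factorial n : ℚ)) *
      (swingCountCard Win i s : ℚ)

def swingCond (a b p q : ℕ) : Prop :=
  (a ≤ p + 1 ∧ a + b ≤ p + q + 1) ∧ ¬(a ≤ p ∧ a + b ≤ p + q)

instance (a b p q : ℕ) : Decidable (swingCond a b p q) := by
  unfold swingCond; infer_instance

lemma sumPowersetCard {α : Type*} [DecidableEq α] (s : Finset α) (f : ℕ → ℕ) :
    ∑ A ∈ s.powerset, f A.card = ∑ p ∈ Finset.range (s.card + 1), s.card.choose p * f p := by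
  rw [Finset.sum_powerset]
  refine Finset.sum_congr rfl fun p hp => ?_
  calc ∑ A ∈ Finset.powersetCard p s, f A.card
      = ∑ _A ∈ Finset.powersetCard p s, f p :=
        Finset.sum_congr rfl fun A hA => by rw [(Finset.mem_powersetCard.1 hA).2]
    _ = _ := by rw [Finset.sum_const, Finset.card_powersetCard, smul_eq_mul]

theorem swings_of_type_one_player (n1 n2 a b : ℕ) (hn1 : 1 ≤ n1) (hn2 : 1 ≤ n2)
    (ha : 1 ≤ a) (ha' : a ≤ n1) (hb : b ≤ n2 - 1)
    (i : Fin (n1 + n2)) (hi : (i : ℕ) < n1) :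
    swingCount (BipWinning n1 n2 a b) i =
      (∑ j ∈ Finset.Icc (b + 1) n2, Nat.choose (n1 - 1) (a - 1) * Nat.choose n2 j) +
      ∑ j ∈ Finset.range (min b (n1 - a) + 1),
        Nat.choose (n1 - 1) (a + j - 1) * Nat.choose n2 (b - j) := by
  classical
  set T1 : Finset (Fin (n1 + n2)) := univ.filter (fun j : Fin (n1 + n2) => (j : ℕ) < n1) with hT1
  set U1 : Finset (Fin (n1 + n2)) := T1.erase i with hU1
  set U2 : Finset (Fin (n1 + n2)) :=
    univ.filter (fun j : Fin (n1 + n2) => ¬ ((j : ℕ) < n1)) with hU2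
  have hiT1 : i ∈ T1 := by simp [hT1, hi]
  have hiU1 : i ∉ U1 := by simp [hU1]
  have hiU2 : i ∉ U2 := by simp [hU2, hi]
  have hT1card : T1.card = n1 := by
    rw [hT1]
    rw [Finset.card_nbij (fun j : Fin (n1 + n2) => (j : ℕ)) (t := Finset.range n1)]
    · exact Finset.card_range n1
    · intro x hx; simp at hx ⊢; exact hx
    · intro x hx y hy hxy; exact Fin.val_injective hxy
    · intro x hx
      simp at hx ⊢
      exact ⟨⟨x, by omega⟩, hx, rfl⟩
  have hU1card : U1.card = n1 - 1 := by
    rw [hU1, Finset.card_erase_of_mem hiT1, hT1card]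
  have hU2card : U2.card = n2 := by
    have h2 : T1.card + U2.card = n1 + n2 := by
      rw [hT1, hU2, Finset.card_filter_add_card_filter_not, Finset.card_univ,
        Fintype.card_fin]
    omega
  -- the swing set as a finset
  set 𝒮 : Finset (Finset (Fin (n1 + n2))) :=
    univ.filter (fun S => i ∈ S ∧ BipWinning n1 n2 a b S ∧
      ¬ BipWinning n1 n2 a b (S.erase i)) with h𝒮
  have hswing : swingCount (BipWinning n1 n2 a b) i = 𝒮.card := by
    rw [swingCount, h𝒮, ← Set.ncard_coe_finset]
    congr 1
    ext S
    simp
  -- the condition on the pair of cardinalities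
  set 𝒯 : Finset (Finset (Fin (n1 + n2)) × Finset (Fin (n1 + n2))) :=
    (U1.powerset ×ˢ U2.powerset).filter (fun AB => swingCond a b AB.1.card AB.2.card) with h𝒯
  -- key cardinality facts for S containing i
  have key : ∀ S : Finset (Fin (n1 + n2)), i ∈ S →
      (S.filter fun j : Fin (n1 + n2) => (j : ℕ) < n1) = insert i (S ∩ U1) ∧
      ((S.erase i).filter fun j : Fin (n1 + n2) => (j : ℕ) < n1) = S ∩ U1 ∧
      S.card = (S ∩ U1).card + (S ∩ U2).card + 1 ∧
      (S.erase i).card = (S ∩ U1).card + (S ∩ U2).card := by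
    intro S hiS
    have h1 : (S.filter fun j : Fin (n1 + n2) => (j : ℕ) < n1) = insert i (S ∩ U1) := by
      ext x
      simp only [Finset.mem_filter, Finset.mem_insert, Finset.mem_inter, hU1, hT1,
        Finset.mem_erase, Finset.mem_filter, Finset.mem_univ, true_and]
      constructor
      · rintro ⟨hxS, hx⟩
        by_cases hxi : x = i
        · exact Or.inl hxi
        · exact Or.inr ⟨hxS, hxi, hx⟩
      · rintro (rfl | ⟨hxS, _, hx⟩)
        · exact ⟨hiS, hi⟩
        · exact ⟨hxS, hx⟩
    have h2 : ((S.erase i).filter fun j : Fin (n1 + n2) => (j : ℕ) < n1) = S ∩ U1 := by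
      ext x
      simp only [Finset.mem_filter, Finset.mem_erase, Finset.mem_inter, hU1, hT1,
        Finset.mem_erase, Finset.mem_filter, Finset.mem_univ, true_and]
      tauto
    have hiSU1 : i ∉ S ∩ U1 := by simp [hiU1]
    have h3 : S.card = (S ∩ U1).card + (S ∩ U2).card + 1 := by
      have hsplit : (S.filter fun j : Fin (n1 + n2) => (j : ℕ) < n1).card +
          (S.filter fun j : Fin (n1 + n2) => ¬ ((j : ℕ) < n1)).card = S.card :=
        Finset.card_filter_add_card_filter_not _
      have hSU2 : (S.filter fun j : Fin (n1 + n2) => ¬ ((j : ℕ) < n1)) = S ∩ U2 := by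
        ext x; simp [hU2]
      rw [h1, hSU2, Finset.card_insert_of_notMem hiSU1] at hsplit
      omega
    have h4 : (S.erase i).card = (S ∩ U1).card + (S ∩ U2).card := by
      rw [Finset.card_erase_of_mem hiS]; omega
    exact ⟨h1, h2, h3, h4⟩
  have hcardST : 𝒮.card = 𝒯.card := by
    apply Finset.card_nbij' (fun S => (S ∩ U1, S ∩ U2))
      (fun AB => insert i (AB.1 ∪ AB.2))
    · -- forward membership
      intro S hS
      rw [h𝒮] at hS
      simp only [Finset.mem_coe, Finset.mem_filter, Finset.mem_univ, true_and] at hS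
      obtain ⟨hiS, hw, hl⟩ := hS
      obtain ⟨h1, h2, h3, h4⟩ := key S hiS
      rw [h𝒯]
      simp only [Finset.mem_coe, Finset.mem_filter, Finset.mem_product, Finset.mem_powerset]
      refine ⟨⟨Finset.inter_subset_right, Finset.inter_subset_right⟩, ?_⟩
      simp only [swingCond]
      constructor
      · rw [BipWinning, h1, Finset.card_insert_of_notMem (by simp [hiU1])] at hw
        exact ⟨hw.1, by omega⟩
      · rw [BipWinning, h2, h4] at hl
        exact hl
    · -- backward membership
      rintro ⟨A, B⟩ hAB
      rw [h𝒯] at hAB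
      simp only [Finset.mem_coe, Finset.mem_filter, Finset.mem_product, Finset.mem_powerset] at hAB
      obtain ⟨⟨hA, hB⟩, hc⟩ := hAB
      have hAB12 : Disjoint A B := by
        refine Finset.disjoint_left.2 fun x hxA hxB => ?_
        have h1 := hA hxA; have h2 := hB hxB
        rw [hU1] at h1; rw [hU2] at h2
        simp only [hT1, Finset.mem_erase, Finset.mem_filter, Finset.mem_univ, true_and] at h1 h2
        exact h2 h1.2
      have hiAB : i ∉ A ∪ B := by
        simp only [Finset.mem_union]
        rintro (h | h)
        · exact hiU1 (hA h)
        · exact hiU2 (hB h)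
      set S := insert i (A ∪ B) with hS
      have hiS : i ∈ S := Finset.mem_insert_self _ _
      have hSint1 : S ∩ U1 = A := by
        rw [hS]
        ext x
        simp only [Finset.mem_inter, Finset.mem_insert, Finset.mem_union]
        constructor
        · rintro ⟨(rfl | hx | hx), hxU⟩
          · exact absurd hxU hiU1
          · exact hx
          · exact absurd (hB hx) (by
              intro h
              rw [hU1] at hxU; rw [hU2] at h
              simp only [hT1, Finset.mem_erase, Finset.mem_filter, Finset.mem_univ,
                true_and] at hxU h
              exact h hxU.2)
        · intro hx
          exact ⟨Or.inr (Or.inl hx), hA hx⟩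
      have hSint2 : S ∩ U2 = B := by
        rw [hS]
        ext x
        simp only [Finset.mem_inter, Finset.mem_insert, Finset.mem_union]
        constructor
        · rintro ⟨(rfl | hx | hx), hxU⟩
          · exact absurd hxU hiU2
          · exact absurd (hA hx) (by
              intro h
              rw [hU1] at h; rw [hU2] at hxU
              simp only [hT1, Finset.mem_erase, Finset.mem_filter, Finset.mem_univ,
                true_and] at hxU h
              exact hxU h.2)
          · exact hx
        · intro hx
          exact ⟨Or.inr (Or.inr hx), hB hx⟩
      obtain ⟨h1, h2, h3, h4⟩ := key S hiS
      simp only [swingCond] at hc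
      rw [h𝒮]
      simp only [Finset.mem_coe, Finset.mem_filter, Finset.mem_univ, true_and]
      refine ⟨hiS, ?_, ?_⟩
      · rw [BipWinning, h1, Finset.card_insert_of_notMem (by simp [hiU1]), h3, hSint1, hSint2]
        exact ⟨hc.1.1, hc.1.2⟩
      · rw [BipWinning, h2, h4, hSint1, hSint2]
        exact hc.2
    · -- left inverse
      intro S hS
      rw [h𝒮] at hS
      simp only [Finset.mem_coe, Finset.mem_filter, Finset.mem_univ, true_and] at hS
      obtain ⟨hiS, -, -⟩ := hS
      ext x
      simp only [Finset.mem_insert, Finset.mem_union, Finset.mem_inter]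
      constructor
      · rintro (rfl | ⟨h, _⟩ | ⟨h, _⟩) <;> first | exact hiS | exact h
      · intro hxS
        by_cases hxi : x = i
        · exact Or.inl hxi
        · by_cases hx1 : (x : ℕ) < n1
          · exact Or.inr (Or.inl ⟨hxS, by simp [hU1, hT1, hxi, hx1]⟩)
          · exact Or.inr (Or.inr ⟨hxS, by simp only [hU2, Finset.mem_filter, Finset.mem_univ, true_and]; exact hx1⟩)
    · -- right inverse
      rintro ⟨A, B⟩ hAB
      rw [h𝒯] at hAB
      simp only [Finset.mem_coe, Finset.mem_filter, Finset.mem_product, Finset.mem_powerset] at hAB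
      obtain ⟨⟨hA, hB⟩, -⟩ := hAB
      have hSint1 : insert i (A ∪ B) ∩ U1 = A := by
        ext x
        simp only [Finset.mem_inter, Finset.mem_insert, Finset.mem_union]
        constructor
        · rintro ⟨(rfl | hx | hx), hxU⟩
          · exact absurd hxU hiU1
          · exact hx
          · exact absurd (hB hx) (by
              intro h
              rw [hU1] at hxU; rw [hU2] at h
              simp only [hT1, Finset.mem_erase, Finset.mem_filter, Finset.mem_univ,
                true_and] at hxU h
              exact h hxU.2)
        · intro hx
          exact ⟨Or.inr (Or.inl hx), hA hx⟩
      have hSint2 : insert i (A ∪ B) ∩ U2 = B := by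
        ext x
        simp only [Finset.mem_inter, Finset.mem_insert, Finset.mem_union]
        constructor
        · rintro ⟨(rfl | hx | hx), hxU⟩
          · exact absurd hxU hiU2
          · exact absurd (hA hx) (by
              intro h
              rw [hU1] at h; rw [hU2] at hxU
              simp only [hT1, Finset.mem_erase, Finset.mem_filter, Finset.mem_univ,
                true_and] at hxU h
              exact hxU h.2)
          · exact hx
        · intro hx
          exact ⟨Or.inr (Or.inr hx), hB hx⟩
      simp [hSint1, hSint2]
  -- now count 𝒯
  have hTcount : 𝒯.card =
      ∑ p ∈ Finset.range ((n1 - 1) + 1), ∑ q ∈ Finset.range (n2 + 1),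
        if swingCond a b p q then Nat.choose (n1 - 1) p * Nat.choose n2 q else 0 := by
    rw [h𝒯, Finset.card_filter, Finset.sum_product]
    rw [sumPowersetCard U1 (fun p => ∑ B ∈ U2.powerset, if swingCond a b p B.card then 1 else 0), hU1card]
    refine Finset.sum_congr rfl fun p hp => ?_
    rw [sumPowersetCard U2 (fun q => if swingCond a b p q then 1 else 0), hU2card, Finset.mul_sum]
    refine Finset.sum_congr rfl fun q hq => ?_
    by_cases h : swingCond a b p q <;> simp [h, mul_comm]
  -- split the condition
  have hsum : ∀ p q : ℕ,
      (if swingCond a b p q then Nat.choose (n1 - 1) p * Nat.choose n2 q else 0)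
      = (if p + 1 = a ∧ b + 1 ≤ q then Nat.choose (n1 - 1) p * Nat.choose n2 q else 0)
      + (if a ≤ p + 1 ∧ p + q + 1 = a + b then Nat.choose (n1 - 1) p * Nat.choose n2 q
          else 0) := by
    intro p q
    by_cases h : swingCond a b p q <;> simp only [h, if_true, if_false] <;> simp only [swingCond] at h <;> split_ifs <;> omega
  rw [hswing]
  rw [hcardST]
  rw [hTcount]
  have hS1 : ∀ p ∈ Finset.range ((n1 - 1) + 1),
      (∑ q ∈ Finset.range (n2 + 1),
        if p + 1 = a ∧ b + 1 ≤ q then Nat.choose (n1 - 1) p * Nat.choose n2 q else 0)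
      = if p = a - 1 then
          (∑ j ∈ Finset.Icc (b + 1) n2, Nat.choose (n1 - 1) (a - 1) * Nat.choose n2 j)
        else 0 := by
    intro p hp
    by_cases hpa : p = a - 1
    · subst hpa
      rw [if_pos rfl, ← Finset.sum_filter]
      refine Finset.sum_congr ?_ fun q hq => rfl
      ext q
      simp only [Finset.mem_filter, Finset.mem_range, Finset.mem_Icc]
      omega
    · rw [if_neg hpa]
      refine Finset.sum_eq_zero fun q hq => ?_
      rw [if_neg]
      rintro ⟨h1, h2⟩
      omega
  have hS2 : ∀ p ∈ Finset.range ((n1 - 1) + 1),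
      (∑ q ∈ Finset.range (n2 + 1),
        if a ≤ p + 1 ∧ p + q + 1 = a + b then Nat.choose (n1 - 1) p * Nat.choose n2 q else 0)
      = if a - 1 ≤ p ∧ p + 1 ≤ a + b then
          Nat.choose (n1 - 1) p * Nat.choose n2 (a + b - 1 - p)
        else 0 := by
    intro p hp
    simp only [Finset.mem_range] at hp
    by_cases hP : a - 1 ≤ p ∧ p + 1 ≤ a + b
    · rw [if_pos hP]
      rw [Finset.sum_eq_single_of_mem (a + b - 1 - p)]
      · rw [if_pos (by omega)]
      · simp only [Finset.mem_range]
        omega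
      · intro q hq hne
        rw [if_neg]
        rintro ⟨h1, h2⟩
        omega
    · rw [if_neg hP]
      refine Finset.sum_eq_zero fun q hq => ?_
      simp only [Finset.mem_range] at hq
      rw [if_neg]
      rintro ⟨h1, h2⟩
      omega
  calc ∑ p ∈ Finset.range ((n1 - 1) + 1), ∑ q ∈ Finset.range (n2 + 1),
        (if swingCond a b p q then Nat.choose (n1 - 1) p * Nat.choose n2 q else 0)
      = ∑ p ∈ Finset.range ((n1 - 1) + 1),
          ((∑ q ∈ Finset.range (n2 + 1),
            if p + 1 = a ∧ b + 1 ≤ q then Nat.choose (n1 - 1) p * Nat.choose n2 q else 0)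
          + ∑ q ∈ Finset.range (n2 + 1),
            if a ≤ p + 1 ∧ p + q + 1 = a + b then Nat.choose (n1 - 1) p * Nat.choose n2 q
              else 0) := by
        refine Finset.sum_congr rfl fun p hp => ?_
        rw [← Finset.sum_add_distrib]
        exact Finset.sum_congr rfl fun q hq => hsum p q
    _ = (∑ p ∈ Finset.range ((n1 - 1) + 1),
          if p = a - 1 then
            (∑ j ∈ Finset.Icc (b + 1) n2, Nat.choose (n1 - 1) (a - 1) * Nat.choose n2 j)
          else 0)
        + ∑ p ∈ Finset.range ((n1 - 1) + 1),
          if a - 1 ≤ p ∧ p + 1 ≤ a + b then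
            Nat.choose (n1 - 1) p * Nat.choose n2 (a + b - 1 - p)
          else 0 := by
        rw [Finset.sum_add_distrib]
        exact congrArg₂ (· + ·) (Finset.sum_congr rfl hS1) (Finset.sum_congr rfl hS2)
    _ = (∑ j ∈ Finset.Icc (b + 1) n2, Nat.choose (n1 - 1) (a - 1) * Nat.choose n2 j)
        + ∑ j ∈ Finset.range (min b (n1 - a) + 1),
            Nat.choose (n1 - 1) (a + j - 1) * Nat.choose n2 (b - j) := by
        congr 1
        · rw [Finset.sum_ite_eq' (Finset.range ((n1 - 1) + 1)) (a - 1)]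
          rw [if_pos (by simp only [Finset.mem_range]; omega)]
        · rw [← Finset.sum_filter]
          refine Finset.sum_nbij' (fun p => p - (a - 1)) (fun j => a - 1 + j) ?_ ?_ ?_ ?_ ?_
          · intro p hp
            simp only [Finset.mem_filter, Finset.mem_range] at hp ⊢
            omega
          · intro j hj
            simp only [Finset.mem_filter, Finset.mem_range] at hj ⊢
            omega
          · intro p hp
            simp only [Finset.mem_filter, Finset.mem_range] at hp
            show a - 1 + (p - (a - 1)) = p
            omega
          · intro j hj
            simp only [Finset.mem_range] at hj
            show a - 1 + j - (a - 1) = j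
            omega
          · intro p hp
            simp only [Finset.mem_filter, Finset.mem_range] at hp
            have h1 : a + (p - (a - 1)) - 1 = p := by omega
            have h2 : b - (p - (a - 1)) = a + b - 1 - p := by omega
            rw [h1, h2]
end

section
/- For integers n₁, n₂ ≥ 1, n = n₁ + n₂, 1 ≤ a ≤ n₁ and 0 ≤ b ≤ n₂ − 1, in the bipartite complete game with minimum G(n₁,n₂,a,b) the number c₂ of swings of any player of type 2 equals Σ_{i=0}^{min(b−1, n₁−a)} C(n₁, a+i)·C(n₂−1, b−i−1), where C(·,·) denotes the binomial coefficient (in particular c₂ = 0 when b = 0). -/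
open Finset

lemma cardT1_aux (n1 n2 : ℕ) (hn2 : 1 ≤ n2) :
    ((Finset.univ : Finset (Fin (n1 + n2))).filter fun x : Fin (n1 + n2) => (x : ℕ) < n1).card = n1 := by
  have h : n1 < n1 + n2 := by omega
  have heq : (Finset.univ : Finset (Fin (n1 + n2))).filter (fun x : Fin (n1 + n2) => (x : ℕ) < n1)
      = Finset.Iio (⟨n1, h⟩ : Fin (n1 + n2)) := by
    ext x
    simp [Fin.lt_def]
  rw [heq, Fin.card_Iio]

lemma cardT2_aux (n1 n2 : ℕ) (hn2 : 1 ≤ n2) :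
    ((Finset.univ : Finset (Fin (n1 + n2))).filter fun x : Fin (n1 + n2) => ¬ (x : ℕ) < n1).card = n2 := by
  have h := Finset.card_filter_add_card_filter_not
    (s := (Finset.univ : Finset (Fin (n1 + n2)))) (p := fun x : Fin (n1 + n2) => (x : ℕ) < n1)
  rw [Finset.card_univ, Fintype.card_fin, cardT1_aux n1 n2 hn2] at h
  omega

theorem swings_of_type_two_player (n1 n2 a b : ℕ) (hn1 : 1 ≤ n1) (hn2 : 1 ≤ n2)
    (ha : 1 ≤ a) (ha' : a ≤ n1) (hb : b ≤ n2 - 1)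
    (i : Fin (n1 + n2)) (hi : n1 ≤ (i : ℕ)) :
    swingCount (BipWinning n1 n2 a b) i =
      (∑ j ∈ Finset.range (min b (n1 - a + 1)),
        Nat.choose n1 (a + j) * Nat.choose (n2 - 1) (b - j - 1)) ∧
    (b = 0 → swingCount (BipWinning n1 n2 a b) i = 0) := by
  classical
  have hiP : ¬ ((i : ℕ) < n1) := not_lt.2 hi
  set m := min b (n1 - a + 1) with hm
  set F : Finset (Finset (Fin (n1 + n2))) :=
    univ.filter (fun S => i ∈ S ∧
      a ≤ (S.filter fun x : Fin (n1 + n2) => (x : ℕ) < n1).card ∧ S.card = a + b) with hF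
  have hset : {S : Finset (Fin (n1 + n2)) | i ∈ S ∧ BipWinning n1 n2 a b S ∧
      ¬ BipWinning n1 n2 a b (S.erase i)} = ↑F := by
    ext S
    simp only [hF, Set.mem_setOf_eq, coe_filter, mem_univ, true_and, Set.mem_setOf_eq,
      BipWinning]
    constructor
    · rintro ⟨hiS, ⟨h1, h2⟩, h3⟩
      refine ⟨hiS, h1, ?_⟩
      have hfe : ((S.erase i).filter fun x : Fin (n1 + n2) => (x : ℕ) < n1)
          = S.filter fun x : Fin (n1 + n2) => (x : ℕ) < n1 := by
        rw [Finset.filter_erase, Finset.erase_eq_of_notMem]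
        simp [hiP]
      have hce : (S.erase i).card = S.card - 1 := card_erase_of_mem hiS
      have hS1 : 1 ≤ S.card := card_pos.2 ⟨i, hiS⟩
      by_contra hne
      exact h3 ⟨hfe ▸ h1, by omega⟩
    · rintro ⟨hiS, h1, h2⟩
      refine ⟨hiS, ⟨h1, h2.ge⟩, ?_⟩
      rintro ⟨-, h4⟩
      have hce : (S.erase i).card = S.card - 1 := card_erase_of_mem hiS
      omega
  have hcount : swingCount (BipWinning n1 n2 a b) i = F.card := by
    rw [swingCount, hset, Set.ncard_coe_finset]
  have hmem : ∀ S ∈ F,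
      (S.filter fun x : Fin (n1 + n2) => (x : ℕ) < n1).card - a ∈ Finset.range m := by
    intro S hS
    simp only [hF, mem_filter, mem_univ, true_and] at hS
    obtain ⟨hiS, h1, h2⟩ := hS
    have hsub : (S.filter fun x : Fin (n1 + n2) => (x : ℕ) < n1) ⊆ S.erase i := by
      intro x hx
      simp only [mem_filter] at hx
      refine mem_erase.2 ⟨?_, hx.1⟩
      rintro rfl; exact hiP hx.2
    have hle1 : (S.filter fun x : Fin (n1 + n2) => (x : ℕ) < n1).card ≤ S.card - 1 := by
      have := card_le_card hsub
      rwa [card_erase_of_mem hiS] at this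
    have hle2 : (S.filter fun x : Fin (n1 + n2) => (x : ℕ) < n1).card ≤ n1 := by
      calc (S.filter fun x : Fin (n1 + n2) => (x : ℕ) < n1).card
          ≤ ((univ : Finset (Fin (n1 + n2))).filter fun x : Fin (n1 + n2) => (x : ℕ) < n1).card :=
            card_le_card (filter_subset_filter _ (subset_univ S))
        _ = n1 := cardT1_aux n1 n2 hn2
    rw [mem_range, hm]
    omega
  have key : swingCount (BipWinning n1 n2 a b) i =
      ∑ j ∈ Finset.range m, n1.choose (a + j) * (n2 - 1).choose (b - j - 1) := by
    rw [hcount, Finset.card_eq_sum_card_fiberwise hmem]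
    refine Finset.sum_congr rfl fun j hj => ?_
    rw [mem_range, hm] at hj
    have hjb : j < b := lt_of_lt_of_le hj (min_le_left _ _)
    have hjn : a + j ≤ n1 := by
      have := lt_of_lt_of_le hj (min_le_right _ _); omega
    -- the fiber
    set T1 : Finset (Fin (n1 + n2)) := univ.filter fun x : Fin (n1 + n2) => (x : ℕ) < n1 with hT1
    set T2' : Finset (Fin (n1 + n2)) :=
      (univ.filter fun x : Fin (n1 + n2) => ¬ (x : ℕ) < n1).erase i with hT2'
    have hcardT2' : T2'.card = n2 - 1 := by
      rw [hT2', card_erase_of_mem, cardT2_aux n1 n2 hn2]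
      simp [hi]
    have key2 : (F.filter fun S =>
        (S.filter fun x : Fin (n1 + n2) => (x : ℕ) < n1).card - a = j).card
        = ((powersetCard (a + j) T1) ×ˢ (powersetCard (b - j - 1) T2')).card := by
      refine Finset.card_bij'
        (fun S _ => (S.filter fun x : Fin (n1 + n2) => (x : ℕ) < n1,
          (S.filter fun x : Fin (n1 + n2) => ¬ (x : ℕ) < n1).erase i))
        (fun p _ => insert i (p.1 ∪ p.2)) ?_ ?_ ?_ ?_
      · -- forward membership
        intro S hS
        simp only [hF, mem_filter, mem_univ, true_and] at hS
        obtain ⟨⟨hiS, h1, h2⟩, h3⟩ := hS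
        have hcP : (S.filter fun x : Fin (n1 + n2) => (x : ℕ) < n1).card = a + j := by
          omega
        have hsplit := Finset.card_filter_add_card_filter_not
          (s := S) (p := fun x : Fin (n1 + n2) => (x : ℕ) < n1)
        have hiN : i ∈ S.filter fun x : Fin (n1 + n2) => ¬ (x : ℕ) < n1 := by
          simp [hiS, hi]
        rw [mem_product]
        constructor
        · rw [mem_powersetCard]
          exact ⟨filter_subset_filter _ (subset_univ S), hcP⟩
        · rw [mem_powersetCard]
          constructor
          · exact erase_subset_erase _ (filter_subset_filter _ (subset_univ S))
          · rw [card_erase_of_mem hiN]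
            omega
      · -- backward membership
        rintro ⟨A, B⟩ hp
        rw [mem_product, mem_powersetCard, mem_powersetCard] at hp
        obtain ⟨⟨hA, hAc⟩, hB, hBc⟩ := hp
        have hAlt : ∀ x ∈ A, (x : ℕ) < n1 := fun x hx => by
          have := hA hx; simp [hT1] at this; exact this
        have hBlt : ∀ x ∈ B, ¬ (x : ℕ) < n1 ∧ x ≠ i := fun x hx => by
          have := hB hx; simp [hT2'] at this; exact ⟨by omega, this.1⟩
        have hiA : i ∉ A := fun h => hiP (hAlt i h)
        have hiB : i ∉ B := fun h => (hBlt i h).2 rfl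
        have hdisj : Disjoint A B := by
          rw [Finset.disjoint_left]
          intro x hxA hxB
          exact (hBlt x hxB).1 (hAlt x hxA)
        have hfP : ((insert i (A ∪ B)).filter fun x : Fin (n1 + n2) => (x : ℕ) < n1) = A := by
          ext x
          simp only [mem_filter, mem_insert, mem_union]
          constructor
          · rintro ⟨(rfl | hx | hx), hlt⟩
            · exact absurd hlt hiP
            · exact hx
            · exact absurd hlt (hBlt x hx).1
          · intro hx
            exact ⟨Or.inr (Or.inl hx), hAlt x hx⟩
        simp only [hF, mem_filter, mem_univ, true_and]
        have hcard : (insert i (A ∪ B)).card = a + b := by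
          rw [card_insert_of_notMem (by simp [hiA, hiB]),
            card_union_of_disjoint hdisj, hAc, hBc]
          omega
        refine ⟨⟨mem_insert_self _ _, ?_, hcard⟩, ?_⟩
        · rw [hfP, hAc]; omega
        · rw [hfP, hAc]; omega
      · -- left inverse
        intro S hS
        simp only [hF, mem_filter, mem_univ, true_and] at hS
        obtain ⟨⟨hiS, -, -⟩, -⟩ := hS
        ext x
        simp only [mem_insert, mem_union, mem_filter, mem_erase]
        constructor
        · rintro (rfl | ⟨h, -⟩ | ⟨-, h, -⟩) <;> first | exact hiS | exact h
        · intro hx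
          by_cases hx1 : (x : ℕ) < n1
          · exact Or.inr (Or.inl ⟨hx, hx1⟩)
          · by_cases hxi : x = i
            · exact Or.inl hxi
            · exact Or.inr (Or.inr ⟨hxi, hx, hx1⟩)
      · -- right inverse
        rintro ⟨A, B⟩ hp
        rw [mem_product, mem_powersetCard, mem_powersetCard] at hp
        obtain ⟨⟨hA, hAc⟩, hB, hBc⟩ := hp
        have hAlt : ∀ x ∈ A, (x : ℕ) < n1 := fun x hx => by
          have := hA hx; simp [hT1] at this; exact this
        have hBlt : ∀ x ∈ B, ¬ (x : ℕ) < n1 ∧ x ≠ i := fun x hx => by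
          have := hB hx; simp [hT2'] at this; exact ⟨by omega, this.1⟩
        have hfP : ((insert i (A ∪ B)).filter fun x : Fin (n1 + n2) => (x : ℕ) < n1) = A := by
          ext x
          simp only [mem_filter, mem_insert, mem_union]
          constructor
          · rintro ⟨(rfl | hx | hx), hlt⟩
            · exact absurd hlt hiP
            · exact hx
            · exact absurd hlt (hBlt x hx).1
          · intro hx
            exact ⟨Or.inr (Or.inl hx), hAlt x hx⟩
        have hfN : (((insert i (A ∪ B)).filter
            fun x : Fin (n1 + n2) => ¬ (x : ℕ) < n1).erase i) = B := by
          ext x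
          simp only [mem_erase, mem_filter, mem_insert, mem_union]
          constructor
          · rintro ⟨hxi, (rfl | hx | hx), hlt⟩
            · exact absurd rfl hxi
            · exact absurd (hAlt x hx) hlt
            · exact hx
          · intro hx
            exact ⟨(hBlt x hx).2, Or.inr (Or.inr hx), (hBlt x hx).1⟩
        exact Prod.ext hfP hfN
    rw [key2, Finset.card_product, Finset.card_powersetCard, Finset.card_powersetCard,
      hcardT2', hT1, cardT1_aux n1 n2 hn2]
  refine ⟨key, fun hb0 => ?_⟩
  rw [key]
  simp [hm, hb0]
end

section
/- For integers n₁, n₂ ≥ 1, n = n₁ + n₂, 1 ≤ a ≤ n₁ and 0 ≤ b ≤ n₂ − 1, the Shapley–Shubik power index SS₁(a,b,n₁,n₂) of any player of type 1 in the bipartite complete game with minimum G(n₁,n₂,a,b) equals (1/n!)·Σ_{i=b+1}^{n₂} C(n₁−1, a−1)·C(n₂, i)·(a+i−1)!·(n−a−i)! + ((a+b−1)!·(n−a−b)!/n!)·Σ_{i=0}^{min(b, n₁−a)} C(n₁−1, a+i−1)·C(n₂, b−i). -/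
open Finset

lemma ncard_setOf_finset {n : ℕ} (p : Finset (Fin n) → Prop) [DecidablePred p] :
    {S : Finset (Fin n) | p S}.ncard = (univ.filter p).card := by
  rw [Set.ncard_eq_toFinset_card']
  congr 1
  ext S
  simp

section Count

variable {n1 n2 : ℕ} (i : Fin (n1 + n2))

private def T1 (n1 n2 : ℕ) : Finset (Fin (n1 + n2)) :=
  univ.filter fun x : Fin (n1 + n2) => (x : ℕ) < n1

private def T2 (n1 n2 : ℕ) : Finset (Fin (n1 + n2)) :=
  univ.filter fun x : Fin (n1 + n2) => ¬ (x : ℕ) < n1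

lemma card_T1 (hn2 : 1 ≤ n2) : (T1 n1 n2).card = n1 := by
  have h : T1 n1 n2 = Finset.Iio (⟨n1, by omega⟩ : Fin (n1 + n2)) := by
    ext x; simp [T1, Fin.lt_def]
  rw [h, Fin.card_Iio]

lemma card_T2 (hn2 : 1 ≤ n2) : (T2 n1 n2).card = n2 := by
  classical
  have := Finset.card_filter_add_card_filter_not
    (s := (univ : Finset (Fin (n1 + n2)))) (p := fun x : Fin (n1 + n2) => (x : ℕ) < n1)
  have hT1 := card_T1 (n1 := n1) (n2 := n2) hn2
  simp only [Finset.card_univ, Fintype.card_fin] at this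
  have : (T1 n1 n2).card + (T2 n1 n2).card = n1 + n2 := this
  omega

/-- Key counting lemma: the number of coalitions containing `i` with exactly `k` type-1
players and `m` type-2 players. -/
lemma count_key (hi : (i : ℕ) < n1) (hn2 : 1 ≤ n2) (k m : ℕ) (hk : 1 ≤ k) :
    (univ.filter fun S : Finset (Fin (n1 + n2)) =>
        i ∈ S ∧ (S.filter fun x : Fin (n1 + n2) => (x : ℕ) < n1).card = k ∧
          (S.filter fun x : Fin (n1 + n2) => ¬ (x : ℕ) < n1).card = m).card =
      Nat.choose (n1 - 1) (k - 1) * Nat.choose n2 m := by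
  classical
  set P : Fin (n1 + n2) → Prop := fun x => (x : ℕ) < n1 with hP
  have key : (univ.filter fun S : Finset (Fin (n1 + n2)) =>
        i ∈ S ∧ (S.filter P).card = k ∧ (S.filter fun x => ¬ P x).card = m).card =
      (((T1 n1 n2).erase i).powersetCard (k - 1) ×ˢ (T2 n1 n2).powersetCard m).card := by
    apply Finset.card_nbij'
      (fun S => ((S.filter P).erase i, S.filter fun x => ¬ P x))
      (fun AB => insert i (AB.1 ∪ AB.2))
    · intro S hS
      simp only [mem_coe, mem_filter, mem_univ, true_and] at hS
      obtain ⟨hiS, hk', hm'⟩ := hS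
      simp only [mem_coe, mem_product, mem_powersetCard]
      have hiP : i ∈ S.filter P := by simp [mem_filter, hiS, hP, hi]
      refine ⟨⟨?_, ?_⟩, ?_, hm'⟩
      · intro x hx
        simp only [mem_erase] at hx ⊢
        refine ⟨hx.1, ?_⟩
        have := hx.2
        simp only [mem_filter] at this
        simp only [T1, mem_filter, mem_univ, true_and]
        exact this.2
      · rw [Finset.card_erase_of_mem hiP, hk']
      · intro x hx
        simp only [mem_filter] at hx
        simp only [T2, mem_filter, mem_univ, true_and]
        exact hx.2
    · intro AB hAB
      simp only [mem_coe, mem_product, mem_powersetCard] at hAB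
      obtain ⟨⟨hA, hAcard⟩, hB, hBcard⟩ := hAB
      have hiA : i ∉ AB.1 := fun h => (Finset.mem_erase.1 (hA h)).1 rfl
      have hAP : ∀ x ∈ AB.1, P x := fun x hx => by
        have := hA hx; simp only [T1, mem_erase, mem_filter] at this; exact this.2.2
      have hBP : ∀ x ∈ AB.2, ¬ P x := fun x hx => by
        have := hB hx; simp only [T2, mem_filter] at this; exact this.2
      have hiB : i ∉ AB.2 := fun h => hBP i h hi
      have hfilterP : (insert i (AB.1 ∪ AB.2)).filter P = insert i AB.1 := by
        ext x
        simp only [mem_filter, mem_insert, mem_union]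
        constructor
        · rintro ⟨h1 | h1 | h1, h2⟩
          · exact Or.inl h1
          · exact Or.inr h1
          · exact absurd h2 (hBP x h1)
        · rintro (rfl | h1)
          · exact ⟨Or.inl rfl, hi⟩
          · exact ⟨Or.inr (Or.inl h1), hAP x h1⟩
      have hfilterNP : (insert i (AB.1 ∪ AB.2)).filter (fun x => ¬ P x) = AB.2 := by
        ext x
        simp only [mem_filter, mem_insert, mem_union]
        constructor
        · rintro ⟨rfl | h1 | h1, h2⟩
          · exact absurd hi h2
          · exact absurd (hAP x h1) h2
          · exact h1
        · intro h1
          exact ⟨Or.inr (Or.inr h1), hBP x h1⟩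
      simp only [mem_coe, mem_filter, mem_univ, true_and]
      refine ⟨mem_insert_self _ _, ?_, ?_⟩
      · rw [hfilterP, Finset.card_insert_of_notMem hiA, hAcard]
        omega
      · rw [hfilterNP, hBcard]
    · intro S hS
      simp only [mem_coe, mem_filter, mem_univ, true_and] at hS
      obtain ⟨hiS, _, _⟩ := hS
      have hiP : i ∈ S.filter P := by simp [mem_filter, hiS, hP, hi]
      dsimp only
      rw [← Finset.insert_union, Finset.insert_erase hiP,
        Finset.filter_union_filter_not_eq]
    · intro AB hAB
      simp only [mem_coe, mem_product, mem_powersetCard] at hAB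
      obtain ⟨⟨hA, hAcard⟩, hB, hBcard⟩ := hAB
      have hiA : i ∉ AB.1 := fun h => (Finset.mem_erase.1 (hA h)).1 rfl
      have hAP : ∀ x ∈ AB.1, P x := fun x hx => by
        have := hA hx; simp only [T1, mem_erase, mem_filter] at this; exact this.2.2
      have hBP : ∀ x ∈ AB.2, ¬ P x := fun x hx => by
        have := hB hx; simp only [T2, mem_filter] at this; exact this.2
      have hfilterP : (insert i (AB.1 ∪ AB.2)).filter P = insert i AB.1 := by
        ext x
        simp only [mem_filter, mem_insert, mem_union]
        constructor
        · rintro ⟨h1 | h1 | h1, h2⟩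
          · exact Or.inl h1
          · exact Or.inr h1
          · exact absurd h2 (hBP x h1)
        · rintro (rfl | h1)
          · exact ⟨Or.inl rfl, hi⟩
          · exact ⟨Or.inr (Or.inl h1), hAP x h1⟩
      have hfilterNP : (insert i (AB.1 ∪ AB.2)).filter (fun x => ¬ P x) = AB.2 := by
        ext x
        simp only [mem_filter, mem_insert, mem_union]
        constructor
        · rintro ⟨rfl | h1 | h1, h2⟩
          · exact absurd hi h2
          · exact absurd (hAP x h1) h2
          · exact h1
        · intro h1
          exact ⟨Or.inr (Or.inr h1), hBP x h1⟩
      ext <;> simp only []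
      · rw [hfilterP, Finset.erase_insert hiA]
      · rw [hfilterNP]
  rw [key, Finset.card_product, Finset.card_powersetCard, Finset.card_powersetCard,
    Finset.card_erase_of_mem (by simp [T1, hi]), card_T1 hn2, card_T2 hn2]

end Count

theorem SS_index_of_type_one_player (n1 n2 a b : ℕ) (hn1 : 1 ≤ n1) (hn2 : 1 ≤ n2)
    (ha : 1 ≤ a) (ha' : a ≤ n1) (hb : b ≤ n2 - 1)
    (i : Fin (n1 + n2)) (hi : (i : ℕ) < n1) :
    SSindex (BipWinning n1 n2 a b) i =
      (1 / (Nat.factorial (n1 + n2) : ℚ)) *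
        (∑ j ∈ Finset.Icc (b + 1) n2,
          ((Nat.choose (n1 - 1) (a - 1) * Nat.choose n2 j *
            Nat.factorial (a + j - 1) * Nat.factorial (n1 + n2 - a - j) : ℕ) : ℚ)) +
      ((Nat.factorial (a + b - 1) : ℚ) * (Nat.factorial (n1 + n2 - a - b) : ℚ) /
          (Nat.factorial (n1 + n2) : ℚ)) *
        ∑ j ∈ Finset.range (min b (n1 - a) + 1),
          ((Nat.choose (n1 - 1) (a + j - 1) * Nat.choose n2 (b - j) : ℕ) : ℚ) := by
  classical
  have hbn2 : b + 1 ≤ n2 := by omega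
  -- characterization of swings
  have hswing : ∀ S : Finset (Fin (n1 + n2)), i ∈ S →
      ((BipWinning n1 n2 a b S ∧ ¬ BipWinning n1 n2 a b (S.erase i)) ↔
        ((S.filter (fun x : Fin (n1 + n2) => (x : ℕ) < n1)).card = a ∧ a + b + 1 ≤ S.card) ∨
        (a ≤ (S.filter (fun x : Fin (n1 + n2) => (x : ℕ) < n1)).card ∧ S.card = a + b)) := by
    intro S hiS
    have hiP : i ∈ S.filter (fun x : Fin (n1 + n2) => (x : ℕ) < n1) := by simp [mem_filter, hiS, hi]
    have he1 : ((S.erase i).filter (fun x : Fin (n1 + n2) => (x : ℕ) < n1)).card = (S.filter (fun x : Fin (n1 + n2) => (x : ℕ) < n1)).card - 1 := by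
      rw [Finset.filter_erase, Finset.card_erase_of_mem hiP]
    have he2 : (S.erase i).card = S.card - 1 := Finset.card_erase_of_mem hiS
    have hfc : 1 ≤ (S.filter (fun x : Fin (n1 + n2) => (x : ℕ) < n1)).card := Finset.card_pos.2 ⟨i, hiP⟩
    have hsc : 1 ≤ S.card := Finset.card_pos.2 ⟨i, hiS⟩
    simp only [BipWinning, he1, he2, not_and_or, not_le]
    constructor
    · rintro ⟨⟨h1, h2⟩, h3 | h3⟩ <;> omega
    · rintro (⟨h1, h2⟩ | ⟨h1, h2⟩)
      · constructor
        · omega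
        · left; omega
      · constructor
        · omega
        · right; omega
  -- swing counts
  have hcount_gt : ∀ s, a + b < s →
      swingCountCard (BipWinning n1 n2 a b) i s =
        Nat.choose (n1 - 1) (a - 1) * Nat.choose n2 (s - a) := by
    intro s hs
    rw [swingCountCard]
    have hsetEq : {S : Finset (Fin (n1 + n2)) | S.card = s ∧ i ∈ S ∧ BipWinning n1 n2 a b S ∧
        ¬ BipWinning n1 n2 a b (S.erase i)} =
        {S : Finset (Fin (n1 + n2)) | i ∈ S ∧
          (S.filter fun x : Fin (n1 + n2) => (x : ℕ) < n1).card = a ∧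
          (S.filter fun x : Fin (n1 + n2) => ¬ (x : ℕ) < n1).card = s - a} := by
      ext S
      simp only [Set.mem_setOf_eq]
      constructor
      · rintro ⟨hcard, hiS, hw⟩
        rw [hswing S hiS] at hw
        have hsum := Finset.card_filter_add_card_filter_not
          (s := S) (p := fun x : Fin (n1 + n2) => (x : ℕ) < n1)
        rcases hw with ⟨h1, h2⟩ | ⟨h1, h2⟩
        · exact ⟨hiS, h1, by omega⟩
        · omega
      · rintro ⟨hiS, h1, h2⟩
        have hsum := Finset.card_filter_add_card_filter_not
          (s := S) (p := fun x : Fin (n1 + n2) => (x : ℕ) < n1)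
        have hScard : S.card = s := by omega
        refine ⟨hScard, hiS, ?_⟩
        rw [hswing S hiS]
        left
        exact ⟨h1, by omega⟩
    rw [hsetEq, ncard_setOf_finset, count_key i hi hn2 a (s - a) ha]
  have hcount_lt : ∀ s, s < a + b →
      swingCountCard (BipWinning n1 n2 a b) i s = 0 := by
    intro s hs
    rw [swingCountCard]
    have hsetEq : {S : Finset (Fin (n1 + n2)) | S.card = s ∧ i ∈ S ∧ BipWinning n1 n2 a b S ∧
        ¬ BipWinning n1 n2 a b (S.erase i)} = ∅ := by
      ext S
      simp only [Set.mem_setOf_eq, Set.mem_empty_iff_false, iff_false, not_and]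
      rintro hcard hiS hw
      have := hw.2
      intro
      omega
    rw [hsetEq, Set.ncard_empty]
  have hcount_eq : swingCountCard (BipWinning n1 n2 a b) i (a + b) =
      ∑ j ∈ Finset.range (b + 1),
        Nat.choose (n1 - 1) (a + j - 1) * Nat.choose n2 (b - j) := by
    rw [swingCountCard]
    have hsetEq : {S : Finset (Fin (n1 + n2)) | S.card = a + b ∧ i ∈ S ∧ BipWinning n1 n2 a b S ∧
        ¬ BipWinning n1 n2 a b (S.erase i)} =
        {S : Finset (Fin (n1 + n2)) | i ∈ S ∧
          a ≤ (S.filter fun x : Fin (n1 + n2) => (x : ℕ) < n1).card ∧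
          (S.filter fun x : Fin (n1 + n2) => (x : ℕ) < n1).card +
            (S.filter fun x : Fin (n1 + n2) => ¬ (x : ℕ) < n1).card = a + b} := by
      ext S
      simp only [Set.mem_setOf_eq]
      constructor
      · rintro ⟨hcard, hiS, hw⟩
        rw [hswing S hiS] at hw
        have hsum := Finset.card_filter_add_card_filter_not
          (s := S) (p := fun x : Fin (n1 + n2) => (x : ℕ) < n1)
        rcases hw with ⟨h1, h2⟩ | ⟨h1, h2⟩ <;> exact ⟨hiS, by omega, by omega⟩
      · rintro ⟨hiS, h1, h2⟩
        have hsum := Finset.card_filter_add_card_filter_not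
          (s := S) (p := fun x : Fin (n1 + n2) => (x : ℕ) < n1)
        have hScard : S.card = a + b := by omega
        refine ⟨hScard, hiS, ?_⟩
        rw [hswing S hiS]
        right
        exact ⟨h1, hScard⟩
    rw [hsetEq, ncard_setOf_finset]
    rw [Finset.card_eq_sum_card_fiberwise
      (f := fun S : Finset (Fin (n1 + n2)) =>
        (S.filter fun x : Fin (n1 + n2) => (x : ℕ) < n1).card)
      (t := Finset.Icc a (a + b))
      (fun S hS => by
        simp only [mem_coe, mem_filter, mem_univ, true_and] at hS
        simp only [mem_coe, mem_Icc]
        omega)]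
    have hmap2 : Finset.Icc a (a + b) = (Finset.range (b + 1)).map (addLeftEmbedding a) := by
      rw [← Nat.Ico_zero_eq_range, Finset.Ico_add_one_right_eq_Icc, Finset.map_add_left_Icc, Nat.add_zero]
    rw [hmap2, Finset.sum_map]
    apply Finset.sum_congr rfl
    intro j hj
    simp only [Finset.mem_range] at hj
    simp only [addLeftEmbedding_apply]
    rw [Finset.filter_filter]
    have hfe : (univ.filter fun S : Finset (Fin (n1 + n2)) =>
        (i ∈ S ∧ a ≤ (S.filter fun x : Fin (n1 + n2) => (x : ℕ) < n1).card ∧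
          (S.filter fun x : Fin (n1 + n2) => (x : ℕ) < n1).card +
            (S.filter fun x : Fin (n1 + n2) => ¬ (x : ℕ) < n1).card = a + b) ∧
          (S.filter fun x : Fin (n1 + n2) => (x : ℕ) < n1).card = a + j) =
        (univ.filter fun S : Finset (Fin (n1 + n2)) =>
          i ∈ S ∧ (S.filter fun x : Fin (n1 + n2) => (x : ℕ) < n1).card = a + j ∧
            (S.filter fun x : Fin (n1 + n2) => ¬ (x : ℕ) < n1).card = b - j) := by
      ext S
      simp only [mem_filter, mem_univ, true_and]
      constructor
      · rintro ⟨⟨hiS, h1, h2⟩, h3⟩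
        exact ⟨hiS, h3, by omega⟩
      · rintro ⟨hiS, h1, h2⟩
        exact ⟨⟨hiS, by omega, by omega⟩, h1⟩
    rw [hfe, count_key i hi hn2 (a + j) (b - j) (by omega)]
  -- now compute the index
  have hab_le : a + b < (n1 + n2) := by omega
  rw [SSindex]
  have hsplit : Finset.Icc 1 (n1 + n2) = Finset.Ioc 0 (a + b) ∪ Finset.Ioc (a + b) (n1 + n2) := by
    rw [Finset.Ioc_union_Ioc_eq_Ioc (by omega) (by omega)]
    rfl
  have hdisj : Disjoint (Finset.Ioc 0 (a + b)) (Finset.Ioc (a + b) (n1 + n2)) := by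
    rw [Finset.disjoint_left]
    intro x hx hx'
    simp only [mem_Ioc] at hx hx'
    omega
  rw [hsplit, Finset.sum_union hdisj]
  have hfirst : ∑ s ∈ Finset.Ioc 0 (a + b),
      ((Nat.factorial (s - 1) : ℚ) * (Nat.factorial ((n1 + n2) - s) : ℚ) / (Nat.factorial (n1 + n2) : ℚ)) *
        (swingCountCard (BipWinning n1 n2 a b) i s : ℚ) =
      ((Nat.factorial (a + b - 1) : ℚ) * (Nat.factorial ((n1 + n2) - (a + b)) : ℚ) /
          (Nat.factorial (n1 + n2) : ℚ)) *
        (swingCountCard (BipWinning n1 n2 a b) i (a + b) : ℚ) := by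
    apply Finset.sum_eq_single_of_mem
    · simp only [mem_Ioc]; omega
    · intro s hs hne
      simp only [mem_Ioc] at hs
      rw [hcount_lt s (by omega)]
      simp
  rw [hfirst]
  have hsecond : ∑ s ∈ Finset.Ioc (a + b) (n1 + n2),
      ((Nat.factorial (s - 1) : ℚ) * (Nat.factorial ((n1 + n2) - s) : ℚ) / (Nat.factorial (n1 + n2) : ℚ)) *
        (swingCountCard (BipWinning n1 n2 a b) i s : ℚ) =
      (1 / (Nat.factorial (n1 + n2) : ℚ)) *
        (∑ j ∈ Finset.Icc (b + 1) n2,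
          ((Nat.choose (n1 - 1) (a - 1) * Nat.choose n2 j *
            Nat.factorial (a + j - 1) * Nat.factorial ((n1 + n2) - a - j) : ℕ) : ℚ)) := by
    rw [Finset.mul_sum]
    have hIoc : Finset.Ioc (a + b) (n1 + n2) = Finset.Icc (a + b + 1) (n1 + n2) :=
      (Finset.Icc_add_one_left_eq_Ioc _ _).symm
    have hmap : Finset.Icc (a + b + 1) (n1 + n2) =
        (Finset.Icc (b + 1) ((n1 + n2) - a)).map (addLeftEmbedding a) := by
      rw [Finset.map_add_left_Icc]
      congr 1
      omega
    rw [hIoc, hmap, Finset.sum_map]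
    have hext : ∑ j ∈ Finset.Icc (b + 1) n2,
        (1 / (Nat.factorial (n1 + n2) : ℚ)) *
          ((Nat.choose (n1 - 1) (a - 1) * Nat.choose n2 j *
            Nat.factorial (a + j - 1) * Nat.factorial ((n1 + n2) - a - j) : ℕ) : ℚ) =
        ∑ j ∈ Finset.Icc (b + 1) ((n1 + n2) - a),
          (1 / (Nat.factorial (n1 + n2) : ℚ)) *
            ((Nat.choose (n1 - 1) (a - 1) * Nat.choose n2 j *
              Nat.factorial (a + j - 1) * Nat.factorial ((n1 + n2) - a - j) : ℕ) : ℚ) := by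
      apply Finset.sum_subset
      · apply Finset.Icc_subset_Icc_right; omega
      · intro j hj hj'
        simp only [mem_Icc] at hj hj'
        have : n2 < j := by omega
        rw [Nat.choose_eq_zero_of_lt this]
        simp
    rw [hext]
    apply Finset.sum_congr rfl
    intro j hj
    simp only [mem_Icc] at hj
    have hje : (addLeftEmbedding a) j = a + j := rfl
    rw [hje, hcount_gt (a + j) (by omega)]
    have h1 : a + j - 1 = a + j - 1 := rfl
    have h2 : (n1 + n2) - (a + j) = (n1 + n2) - a - j := by omega
    have h3 : a + j - a = j := by omega
    rw [h2, h3]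
    push_cast
    ring
  rw [hsecond, hcount_eq]
  have hlast : ∑ j ∈ Finset.range (b + 1),
      Nat.choose (n1 - 1) (a + j - 1) * Nat.choose n2 (b - j) =
      ∑ j ∈ Finset.range (min b (n1 - a) + 1),
        Nat.choose (n1 - 1) (a + j - 1) * Nat.choose n2 (b - j) := by
    symm
    apply Finset.sum_subset
    · apply Finset.range_subset_range.2; omega
    · intro j hj hj'
      simp only [Finset.mem_range] at hj hj'
      have : n1 - 1 < a + j - 1 := by omega
      rw [Nat.choose_eq_zero_of_lt this]
      simp
  rw [hlast]
  have hsub : (n1 + n2) - (a + b) = (n1 + n2) - a - b := by omega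
  rw [hsub]
  push_cast
  ring
end

section
/- For integers n₁, n₂ ≥ 1, n = n₁ + n₂, 1 ≤ a ≤ n₁ and 0 ≤ b ≤ n₂ − 1, the Shapley–Shubik power index SS₂(a,b,n₁,n₂) of any player of type 2 in the bipartite complete game with minimum G(n₁,n₂,a,b) equals ((a+b−1)!·(n−a−b)!/n!)·Σ_{i=0}^{min(b−1, n₁−a)} C(n₁, a+i)·C(n₂−1, b−i−1). -/
open Finset

/- ### Auxiliary lemmas -/

private lemma aux_filter_erase (n1 n2 : ℕ) (i : Fin (n1 + n2)) (hi : n1 ≤ (i : ℕ))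
    (S : Finset (Fin (n1 + n2))) :
    ((S.erase i).filter fun x : Fin (n1 + n2) => (x : ℕ) < n1)
      = S.filter fun x : Fin (n1 + n2) => (x : ℕ) < n1 := by
  rw [Finset.filter_erase, Finset.erase_eq_of_notMem]
  simp only [Finset.mem_filter]
  rintro ⟨-, h⟩
  omega

/-- The swing set for a type-2 player is contained in coalitions of size `a+b`. -/
private lemma aux_swing_set_eq (n1 n2 a b : ℕ) (ha : 1 ≤ a)
    (i : Fin (n1 + n2)) (hi : n1 ≤ (i : ℕ)) (s : ℕ) :
    {S : Finset (Fin (n1 + n2)) | S.card = s ∧ i ∈ S ∧ BipWinning n1 n2 a b S ∧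
        ¬ BipWinning n1 n2 a b (S.erase i)} =
      if s = a + b then
        ↑(Finset.univ.filter fun S : Finset (Fin (n1 + n2)) =>
            S.card = a + b ∧ i ∈ S ∧
              a ≤ (S.filter fun x : Fin (n1 + n2) => (x : ℕ) < n1).card)
      else ∅ := by
  split_ifs with hs
  · subst hs
    ext S
    simp only [Set.mem_setOf_eq, Finset.coe_filter, Finset.mem_univ, true_and,
      Set.mem_setOf_eq, BipWinning]
    constructor
    · rintro ⟨hc, hmem, ⟨h1, -⟩, -⟩
      exact ⟨hc, hmem, h1⟩
    · rintro ⟨hc, hmem, h1⟩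
      refine ⟨hc, hmem, ⟨h1, hc.ge⟩, ?_⟩
      rintro ⟨-, h2⟩
      rw [Finset.card_erase_of_mem hmem, hc] at h2
      omega
  · ext S
    simp only [Set.mem_setOf_eq, Set.mem_empty_iff_false, iff_false]
    rintro ⟨hc, hmem, ⟨h1, h2⟩, hl⟩
    apply hl
    refine ⟨?_, ?_⟩
    · rwa [aux_filter_erase n1 n2 i hi]
    · rw [Finset.card_erase_of_mem hmem]
      rcases Nat.lt_or_ge (a + b) S.card with h | h
      · omega
      · exfalso; exact hs (by omega)

private lemma aux_T1_card (n1 n2 : ℕ) (hn2 : 1 ≤ n2) :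
    (Finset.univ.filter fun x : Fin (n1 + n2) => (x : ℕ) < n1).card = n1 := by
  have h : (Finset.univ.filter fun x : Fin (n1 + n2) => (x : ℕ) < n1)
      = Finset.Iio (⟨n1, by omega⟩ : Fin (n1 + n2)) := by
    ext x
    simp [Fin.lt_def]
  rw [h, Fin.card_Iio]

private lemma aux_T2_card (n1 n2 : ℕ) (i : Fin (n1 + n2)) (hi : n1 ≤ (i : ℕ)) (hn2 : 1 ≤ n2) :
    ((Finset.univ.filter fun x : Fin (n1 + n2) => ¬ (x : ℕ) < n1).erase i).card = n2 - 1 := by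
  have hmem : i ∈ Finset.univ.filter fun x : Fin (n1 + n2) => ¬ (x : ℕ) < n1 := by
    simp; omega
  rw [Finset.card_erase_of_mem hmem]
  have h := Finset.card_filter_add_card_filter_not
    (s := (Finset.univ : Finset (Fin (n1 + n2)))) (fun x : Fin (n1 + n2) => (x : ℕ) < n1)
  rw [aux_T1_card n1 n2 hn2, Finset.card_univ, Fintype.card_fin] at h
  omega

/-- Count of the `j`-th fiber of the swing set. -/
private lemma aux_fiber_card (n1 n2 a b : ℕ) (hn2 : 1 ≤ n2) (ha' : a ≤ n1)
    (i : Fin (n1 + n2)) (hi : n1 ≤ (i : ℕ)) (j : ℕ) (hj : j < b) :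
    (Finset.univ.filter fun S : Finset (Fin (n1 + n2)) =>
        S.card = a + b ∧ i ∈ S ∧
          (S.filter fun x : Fin (n1 + n2) => (x : ℕ) < n1).card = a + j).card
      = Nat.choose n1 (a + j) * Nat.choose (n2 - 1) (b - j - 1) := by
  classical
  have hiT1 : ¬ ((i : ℕ) < n1) := by omega
  have key : (Finset.univ.filter fun S : Finset (Fin (n1 + n2)) =>
        S.card = a + b ∧ i ∈ S ∧
          (S.filter fun x : Fin (n1 + n2) => (x : ℕ) < n1).card = a + j).card
      = (((Finset.univ.filter fun x : Fin (n1 + n2) => (x : ℕ) < n1).powersetCard (a + j)) ×ˢ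
          (((Finset.univ.filter fun x : Fin (n1 + n2) => ¬ (x : ℕ) < n1).erase i).powersetCard
            (b - j - 1))).card := by
    refine Finset.card_bij'
      (fun S _ => (S.filter fun x : Fin (n1 + n2) => (x : ℕ) < n1,
        (S.erase i).filter fun x : Fin (n1 + n2) => ¬ (x : ℕ) < n1))
      (fun AB _ => insert i (AB.1 ∪ AB.2)) ?fwd ?bwd ?linv ?rinv
    case fwd =>
      intro S hS
      simp only [Finset.mem_filter, Finset.mem_univ, true_and] at hS
      obtain ⟨hc, hmem, ht1⟩ := hS
      simp only [Finset.mem_product, Finset.mem_powersetCard]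
      refine ⟨⟨?_, ht1⟩, ?_, ?_⟩
      · intro x hx
        simp only [Finset.mem_filter] at hx ⊢
        exact ⟨Finset.mem_univ x, hx.2⟩
      · intro x hx
        simp only [Finset.mem_filter, Finset.mem_erase] at hx ⊢
        exact ⟨hx.1.1, Finset.mem_univ x, hx.2⟩
      · have h1 : ((S.erase i).filter fun x : Fin (n1 + n2) => (x : ℕ) < n1).card = a + j := by
          rw [aux_filter_erase n1 n2 i hi S]; exact ht1
        have h2 := Finset.card_filter_add_card_filter_not (s := S.erase i)
          (fun x : Fin (n1 + n2) => (x : ℕ) < n1)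
        rw [h1, Finset.card_erase_of_mem hmem, hc] at h2
        omega
    case bwd =>
      rintro ⟨A, B⟩ hAB
      simp only [Finset.mem_product, Finset.mem_powersetCard] at hAB
      obtain ⟨⟨hA, hAc⟩, hB, hBc⟩ := hAB
      have hA' : ∀ x ∈ A, (x : ℕ) < n1 := fun x hx => by
        have := hA hx; simp only [Finset.mem_filter, Finset.mem_univ, true_and] at this
        exact this
      have hB' : ∀ x ∈ B, x ≠ i ∧ ¬ (x : ℕ) < n1 := fun x hx => by
        have := hB hx
        simp only [Finset.mem_erase, Finset.mem_filter, Finset.mem_univ, true_and] at this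
        exact this
      have hiA : i ∉ A := fun h => hiT1 (hA' i h)
      have hiB : i ∉ B := fun h => (hB' i h).1 rfl
      have hABdisj : Disjoint A B := by
        rw [Finset.disjoint_left]
        intro x hxA hxB
        exact (hB' x hxB).2 (hA' x hxA)
      have hiAB : i ∉ A ∪ B := by simp [hiA, hiB]
      have hfilA : (A.filter fun x : Fin (n1 + n2) => (x : ℕ) < n1) = A :=
        Finset.filter_true_of_mem hA'
      have hfilB : (B.filter fun x : Fin (n1 + n2) => (x : ℕ) < n1) = ∅ :=
        Finset.filter_false_of_mem fun x hx => (hB' x hx).2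
      show insert i (A ∪ B) ∈ Finset.univ.filter _
      simp only [Finset.mem_filter, Finset.mem_univ, true_and]
      refine ⟨?_, Finset.mem_insert_self i _, ?_⟩
      · rw [Finset.card_insert_of_notMem hiAB, Finset.card_union_of_disjoint hABdisj,
          hAc, hBc]
        omega
      · rw [Finset.filter_insert, if_neg hiT1, Finset.filter_union, hfilA, hfilB,
          Finset.union_empty, hAc]
    case linv =>
      intro S hS
      simp only [Finset.mem_filter, Finset.mem_univ, true_and] at hS
      obtain ⟨hc, hmem, ht1⟩ := hS
      show insert i ((S.filter fun x : Fin (n1 + n2) => (x : ℕ) < n1) ∪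
        ((S.erase i).filter fun x : Fin (n1 + n2) => ¬ (x : ℕ) < n1)) = S
      rw [← aux_filter_erase n1 n2 i hi S,
        Finset.filter_union_filter_not_eq (fun x : Fin (n1 + n2) => (x : ℕ) < n1) (S.erase i),
        Finset.insert_erase hmem]
    case rinv =>
      rintro ⟨A, B⟩ hAB
      simp only [Finset.mem_product, Finset.mem_powersetCard] at hAB
      obtain ⟨⟨hA, hAc⟩, hB, hBc⟩ := hAB
      have hA' : ∀ x ∈ A, (x : ℕ) < n1 := fun x hx => by
        have := hA hx; simp only [Finset.mem_filter, Finset.mem_univ, true_and] at this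
        exact this
      have hB' : ∀ x ∈ B, x ≠ i ∧ ¬ (x : ℕ) < n1 := fun x hx => by
        have := hB hx
        simp only [Finset.mem_erase, Finset.mem_filter, Finset.mem_univ, true_and] at this
        exact this
      have hiA : i ∉ A := fun h => hiT1 (hA' i h)
      have hiB : i ∉ B := fun h => (hB' i h).1 rfl
      have hiAB : i ∉ A ∪ B := by simp [hiA, hiB]
      have hfilA : (A.filter fun x : Fin (n1 + n2) => (x : ℕ) < n1) = A :=
        Finset.filter_true_of_mem hA'
      have hfilB : (B.filter fun x : Fin (n1 + n2) => (x : ℕ) < n1) = ∅ :=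
        Finset.filter_false_of_mem fun x hx => (hB' x hx).2
      have hfilA' : (A.filter fun x : Fin (n1 + n2) => ¬ (x : ℕ) < n1) = ∅ :=
        Finset.filter_false_of_mem fun x hx => not_not_intro (hA' x hx)
      have hfilB' : (B.filter fun x : Fin (n1 + n2) => ¬ (x : ℕ) < n1) = B :=
        Finset.filter_true_of_mem fun x hx => (hB' x hx).2
      have herase : (insert i (A ∪ B)).erase i = A ∪ B := Finset.erase_insert hiAB
      show ((insert i (A ∪ B)).filter fun x : Fin (n1 + n2) => (x : ℕ) < n1,
        ((insert i (A ∪ B)).erase i).filter fun x : Fin (n1 + n2) => ¬ (x : ℕ) < n1) = (A, B)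
      rw [Finset.filter_insert, if_neg hiT1, Finset.filter_union, hfilA, hfilB,
        Finset.union_empty, herase, Finset.filter_union, hfilA', hfilB', Finset.empty_union]
  rw [key, Finset.card_product, Finset.card_powersetCard, Finset.card_powersetCard,
    aux_T1_card n1 n2 hn2, aux_T2_card n1 n2 i hi hn2]

/-- The total swing count at cardinality `a+b`. -/
private lemma aux_count_eq (n1 n2 a b : ℕ) (hn2 : 1 ≤ n2) (ha : 1 ≤ a) (ha' : a ≤ n1)
    (i : Fin (n1 + n2)) (hi : n1 ≤ (i : ℕ)) :
    (Finset.univ.filter fun S : Finset (Fin (n1 + n2)) =>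
        S.card = a + b ∧ i ∈ S ∧
          a ≤ (S.filter fun x : Fin (n1 + n2) => (x : ℕ) < n1).card).card
      = ∑ j ∈ Finset.range (min b (n1 - a + 1)),
          Nat.choose n1 (a + j) * Nat.choose (n2 - 1) (b - j - 1) := by
  classical
  have hbound : ∀ S ∈ (Finset.univ.filter fun S : Finset (Fin (n1 + n2)) =>
      S.card = a + b ∧ i ∈ S ∧
        a ≤ (S.filter fun x : Fin (n1 + n2) => (x : ℕ) < n1).card),
      (S.filter fun x : Fin (n1 + n2) => (x : ℕ) < n1).card - a
        ∈ Finset.range (min b (n1 - a + 1)) := by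
    intro S hS
    simp only [Finset.mem_filter, Finset.mem_univ, true_and] at hS
    obtain ⟨hc, hmem, ht1⟩ := hS
    have h1 : (S.filter fun x : Fin (n1 + n2) => (x : ℕ) < n1).card ≤ n1 := by
      have := Finset.card_le_card (Finset.filter_subset_filter
        (fun x : Fin (n1 + n2) => (x : ℕ) < n1) (Finset.subset_univ S))
      rwa [aux_T1_card n1 n2 hn2] at this
    have h2 : (S.filter fun x : Fin (n1 + n2) => (x : ℕ) < n1).card ≤ a + b - 1 := by
      have hsub : (S.filter fun x : Fin (n1 + n2) => (x : ℕ) < n1) ⊆ S.erase i := by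
        intro x hx
        simp only [Finset.mem_filter] at hx
        refine Finset.mem_erase.mpr ⟨?_, hx.1⟩
        rintro rfl
        omega
      have := Finset.card_le_card hsub
      rwa [Finset.card_erase_of_mem hmem, hc] at this
    simp only [Finset.mem_range, lt_min_iff]
    omega
  rw [Finset.card_eq_sum_card_fiberwise hbound]
  apply Finset.sum_congr rfl
  intro j hj
  simp only [Finset.mem_range, lt_min_iff] at hj
  rw [Finset.filter_filter]
  have hcong : (Finset.univ.filter fun S : Finset (Fin (n1 + n2)) =>
      (S.card = a + b ∧ i ∈ S ∧
        a ≤ (S.filter fun x : Fin (n1 + n2) => (x : ℕ) < n1).card) ∧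
        (S.filter fun x : Fin (n1 + n2) => (x : ℕ) < n1).card - a = j)
      = Finset.univ.filter fun S : Finset (Fin (n1 + n2)) =>
          S.card = a + b ∧ i ∈ S ∧
            (S.filter fun x : Fin (n1 + n2) => (x : ℕ) < n1).card = a + j := by
    apply Finset.filter_congr
    intro S _
    constructor
    · rintro ⟨⟨hc, hmem, ht1⟩, hfib⟩
      exact ⟨hc, hmem, by omega⟩
    · rintro ⟨hc, hmem, ht1⟩
      exact ⟨⟨hc, hmem, by omega⟩, by omega⟩
  rw [hcong, aux_fiber_card n1 n2 a b hn2 ha' i hi j hj.1]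

private lemma aux_swingCountCard_ne (n1 n2 a b : ℕ) (ha : 1 ≤ a)
    (i : Fin (n1 + n2)) (hi : n1 ≤ (i : ℕ)) (s : ℕ) (hs : s ≠ a + b) :
    swingCountCard (BipWinning n1 n2 a b) i s = 0 := by
  rw [swingCountCard, aux_swing_set_eq n1 n2 a b ha i hi s, if_neg hs, Set.ncard_empty]

private lemma aux_swingCountCard_eq (n1 n2 a b : ℕ) (hn2 : 1 ≤ n2) (ha : 1 ≤ a) (ha' : a ≤ n1)
    (i : Fin (n1 + n2)) (hi : n1 ≤ (i : ℕ)) :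
    swingCountCard (BipWinning n1 n2 a b) i (a + b)
      = ∑ j ∈ Finset.range (min b (n1 - a + 1)),
          Nat.choose n1 (a + j) * Nat.choose (n2 - 1) (b - j - 1) := by
  rw [swingCountCard, aux_swing_set_eq n1 n2 a b ha i hi (a + b), if_pos rfl,
    Set.ncard_coe_finset, aux_count_eq n1 n2 a b hn2 ha ha' i hi]

theorem SS_index_of_type_two_player (n1 n2 a b : ℕ) (hn1 : 1 ≤ n1) (hn2 : 1 ≤ n2)
    (ha : 1 ≤ a) (ha' : a ≤ n1) (hb : b ≤ n2 - 1)
    (i : Fin (n1 + n2)) (hi : n1 ≤ (i : ℕ)) :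
    SSindex (BipWinning n1 n2 a b) i =
      ((Nat.factorial (a + b - 1) : ℚ) * (Nat.factorial (n1 + n2 - a - b) : ℚ) /
          (Nat.factorial (n1 + n2) : ℚ)) *
        ∑ j ∈ Finset.range (min b (n1 - a + 1)),
          ((Nat.choose n1 (a + j) * Nat.choose (n2 - 1) (b - j - 1) : ℕ) : ℚ) := by
  rw [SSindex]
  rw [Finset.sum_eq_single_of_mem (a + b)]
  · rw [aux_swingCountCard_eq n1 n2 a b hn2 ha ha' i hi]
    have h1 : a + b - 1 = a + b - 1 := rfl
    have h2 : n1 + n2 - (a + b) = n1 + n2 - a - b := by omega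
    rw [h2]
    push_cast
    ring
  · simp only [Finset.mem_Icc]
    omega
  · intro s _ hs
    rw [aux_swingCountCard_ne n1 n2 a b ha i hi s hs]
    simp
end

section
/- For integers n₁, n₂ ≥ 1, n = n₁ + n₂, 1 ≤ a ≤ n₁ and 1 ≤ b ≤ n₂ − 1, one has SS₂(a,b,n₁,n₂) − SS₂(a,b−1,n₁,n₂) = (a+b−2)!·(n−a−b)!·n₁·C(n₁−1, a−1)·C(n₂−1, b−1)/n!, and in particular this difference is strictly positive; i.e., the Shapley–Shubik index of a type-2 player is strictly increasing in b. -/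
open Finset

lemma card_T1_s13 (n1 n2 : ℕ) :
    (univ.filter fun x : Fin (n1 + n2) => (x : ℕ) < n1).card = n1 := by
  have h : (univ.filter fun x : Fin (n1 + n2) => (x : ℕ) < n1)
      = Finset.map (Fin.castAddEmb n2) univ := by
    ext x
    simp only [mem_filter, mem_univ, true_and, mem_map]
    constructor
    · intro hx
      exact ⟨⟨(x : ℕ), hx⟩, by ext; simp [Fin.castAddEmb]⟩
    · rintro ⟨y, -, rfl⟩
      simpa [Fin.castAddEmb] using y.2
  rw [h, card_map, card_univ, Fintype.card_fin]

lemma card_T2_erase (n1 n2 : ℕ) (i : Fin (n1 + n2)) (hi : n1 ≤ (i : ℕ)) :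
    ((univ.filter fun x : Fin (n1 + n2) => ¬ ((x : ℕ) < n1)).erase i).card = n2 - 1 := by
  have hmem : i ∈ univ.filter fun x : Fin (n1 + n2) => ¬ ((x : ℕ) < n1) := by
    simpa using hi
  rw [card_erase_of_mem hmem]
  have h2 : (univ.filter fun x : Fin (n1 + n2) => ¬ ((x : ℕ) < n1)).card
      + (univ.filter fun x : Fin (n1 + n2) => (x : ℕ) < n1).card = n1 + n2 := by
    rw [add_comm, card_filter_add_card_filter_not, card_univ, Fintype.card_fin]
  rw [card_T1_s13] at h2
  omega

lemma fiber_count (n1 n2 m j : ℕ) (i : Fin (n1 + n2)) (hi : n1 ≤ (i : ℕ))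
    (hj : j + 1 ≤ m) :
    (univ.filter fun S : Finset (Fin (n1 + n2)) =>
        i ∈ S ∧ S.card = m ∧ (S.filter fun x : Fin (n1 + n2) => (x : ℕ) < n1).card = j).card
      = n1.choose j * (n2 - 1).choose (m - 1 - j) := by
  have hip : ¬ ((i : ℕ) < n1) := Nat.not_lt.mpr hi
  set T1 : Finset (Fin (n1 + n2)) := univ.filter (fun x : Fin (n1 + n2) => (x : ℕ) < n1) with hT1
  set T2 : Finset (Fin (n1 + n2)) :=
    (univ.filter fun x : Fin (n1 + n2) => ¬ ((x : ℕ) < n1)).erase i with hT2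
  have hA' : ∀ A : Finset (Fin (n1 + n2)), A ⊆ T1 → ∀ x ∈ A, (x : ℕ) < n1 := by
    intro A hA x hx
    have := hA hx
    rw [hT1, mem_filter] at this
    exact this.2
  have hB' : ∀ B : Finset (Fin (n1 + n2)), B ⊆ T2 → ∀ x ∈ B, x ≠ i ∧ ¬ ((x : ℕ) < n1) := by
    intro B hB x hx
    have := hB hx
    rw [hT2, mem_erase, mem_filter] at this
    exact ⟨this.1, this.2.2⟩
  have key : (univ.filter fun S : Finset (Fin (n1 + n2)) =>
        i ∈ S ∧ S.card = m ∧ (S.filter fun x : Fin (n1 + n2) => (x : ℕ) < n1).card = j).card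
      = ((powersetCard j T1) ×ˢ (powersetCard (m - 1 - j) T2)).card := by
    have efil : ∀ (A B : Finset (Fin (n1 + n2))), A ⊆ T1 → B ⊆ T2 →
        (insert i (A ∪ B)).filter (fun x : Fin (n1 + n2) => (x : ℕ) < n1) = A := by
      intro A B hA hB
      ext x
      simp only [mem_filter, mem_insert, mem_union]
      constructor
      · rintro ⟨(rfl | hx | hx), hlt⟩
        · exact absurd hlt hip
        · exact hx
        · exact absurd hlt (hB' B hB x hx).2
      · intro hx
        exact ⟨Or.inr (Or.inl hx), hA' A hA x hx⟩
    apply card_bij' (i := fun (S : Finset (Fin (n1 + n2))) _ =>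
        (S.filter fun x : Fin (n1 + n2) => (x : ℕ) < n1,
         (S.filter fun x : Fin (n1 + n2) => ¬ ((x : ℕ) < n1)).erase i))
      (j := fun (q : Finset (Fin (n1 + n2)) × Finset (Fin (n1 + n2))) _ => insert i (q.1 ∪ q.2))
    · rintro S hS
      simp only [mem_filter, mem_univ, true_and] at hS
      obtain ⟨hiS, hcard, hfil⟩ := hS
      simp only [mem_product, mem_powersetCard]
      have hsplit : (S.filter fun x : Fin (n1 + n2) => (x : ℕ) < n1).card
          + (S.filter fun x : Fin (n1 + n2) => ¬ ((x : ℕ) < n1)).card = m := by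
        rw [card_filter_add_card_filter_not, hcard]
      have hiS2 : i ∈ S.filter fun x : Fin (n1 + n2) => ¬ ((x : ℕ) < n1) := by
        rw [mem_filter]; exact ⟨hiS, hip⟩
      refine ⟨⟨filter_subset_filter _ (subset_univ S), hfil⟩,
        erase_subset_erase _ (filter_subset_filter _ (subset_univ S)), ?_⟩
      rw [card_erase_of_mem hiS2]
      omega
    · rintro ⟨A, B⟩ hq
      simp only [mem_product, mem_powersetCard] at hq
      obtain ⟨⟨hA, hAc⟩, hB, hBc⟩ := hq
      have hiA : i ∉ A := fun h => hip (hA' A hA i h)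
      have hiB : i ∉ B := fun h => (hB' B hB i h).1 rfl
      have hdisj : Disjoint A B := by
        rw [Finset.disjoint_left]
        intro x hxA hxB
        exact (hB' B hB x hxB).2 (hA' A hA x hxA)
      simp only [mem_filter, mem_univ, true_and]
      refine ⟨mem_insert_self _ _, ?_, ?_⟩
      · rw [card_insert_of_notMem (by simp [hiA, hiB]), card_union_of_disjoint hdisj]
        omega
      · rw [efil A B hA hB, hAc]
    · rintro S hS
      simp only [mem_filter, mem_univ, true_and] at hS
      obtain ⟨hiS, -, -⟩ := hS
      ext x
      simp only [mem_insert, mem_union, mem_erase, mem_filter]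
      constructor
      · rintro (rfl | ⟨hx, -⟩ | ⟨-, hx, -⟩) <;> assumption
      · intro hx
        by_cases hxi : x = i
        · exact Or.inl hxi
        · by_cases hxp : (x : ℕ) < n1
          · exact Or.inr (Or.inl ⟨hx, hxp⟩)
          · exact Or.inr (Or.inr ⟨hxi, hx, hxp⟩)
    · rintro ⟨A, B⟩ hq
      simp only [mem_product, mem_powersetCard] at hq
      obtain ⟨⟨hA, -⟩, hB, -⟩ := hq
      have hiB : i ∉ B := fun h => (hB' B hB i h).1 rfl
      have e2 : ((insert i (A ∪ B)).filter fun x : Fin (n1 + n2) => ¬ ((x : ℕ) < n1)).erase i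
          = B := by
        ext x
        simp only [mem_erase, mem_filter, mem_insert, mem_union]
        constructor
        · rintro ⟨hxi, (rfl | hx | hx), hnlt⟩
          · exact absurd rfl hxi
          · exact absurd (hA' A hA x hx) hnlt
          · exact hx
        · intro hx
          have hxi : x ≠ i := fun h => hiB (h ▸ hx)
          exact ⟨hxi, Or.inr (Or.inr hx), (hB' B hB x hx).2⟩
      rw [efil A B hA hB, e2]
  rw [key, card_product, card_powersetCard, card_powersetCard, hT1, hT2, card_T1_s13,
    card_T2_erase n1 n2 i hi]

lemma N_count (n1 n2 a m : ℕ) (i : Fin (n1 + n2)) (hi : n1 ≤ (i : ℕ)) (ha : 1 ≤ a) :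
    (univ.filter fun S : Finset (Fin (n1 + n2)) =>
        i ∈ S ∧ S.card = m ∧ a ≤ (S.filter fun x : Fin (n1 + n2) => (x : ℕ) < n1).card).card
      = ∑ j ∈ Icc a (m - 1), n1.choose j * (n2 - 1).choose (m - 1 - j) := by
  have hip : ¬ ((i : ℕ) < n1) := Nat.not_lt.mpr hi
  rw [card_eq_sum_card_fiberwise
    (f := fun S : Finset (Fin (n1 + n2)) =>
      (S.filter fun x : Fin (n1 + n2) => (x : ℕ) < n1).card)
    (t := Icc a (m - 1))]
  · apply sum_congr rfl
    intro j hj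
    rw [mem_Icc] at hj
    rw [filter_filter]
    rw [show (univ.filter fun S : Finset (Fin (n1 + n2)) =>
        (i ∈ S ∧ S.card = m ∧ a ≤ (S.filter fun x : Fin (n1 + n2) => (x : ℕ) < n1).card)
          ∧ (S.filter fun x : Fin (n1 + n2) => (x : ℕ) < n1).card = j)
      = (univ.filter fun S : Finset (Fin (n1 + n2)) =>
        i ∈ S ∧ S.card = m ∧ (S.filter fun x : Fin (n1 + n2) => (x : ℕ) < n1).card = j) from ?_]
    · exact fiber_count n1 n2 m j i hi (by omega)
    · apply filter_congr
      intro S _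
      constructor
      · rintro ⟨⟨h1, h2, -⟩, h4⟩; exact ⟨h1, h2, h4⟩
      · rintro ⟨h1, h2, h4⟩; exact ⟨⟨h1, h2, by omega⟩, h4⟩
  · intro S hS
    simp only [mem_coe, mem_filter, mem_univ, true_and] at hS
    obtain ⟨hiS, hcard, hfc⟩ := hS
    rw [mem_coe, mem_Icc]
    refine ⟨hfc, ?_⟩
    have hsub : (S.filter fun x : Fin (n1 + n2) => (x : ℕ) < n1) ⊆ S.erase i := by
      rw [subset_erase]
      exact ⟨filter_subset _ _, by simp [hip]⟩
    have := card_le_card hsub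
    rw [card_erase_of_mem hiS, hcard] at this
    exact this

lemma swing_eq (n1 n2 a b' s : ℕ) (i : Fin (n1 + n2)) (hi : n1 ≤ (i : ℕ)) :
    swingCountCard (BipWinning n1 n2 a b') i s =
      if s = a + b' then
        (univ.filter fun S : Finset (Fin (n1 + n2)) =>
          i ∈ S ∧ S.card = a + b' ∧
            a ≤ (S.filter fun x : Fin (n1 + n2) => (x : ℕ) < n1).card).card
      else 0 := by
  classical
  have hip : ¬ ((i : ℕ) < n1) := Nat.not_lt.mpr hi
  have hfe : ∀ S : Finset (Fin (n1 + n2)),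
      ((S.erase i).filter fun x : Fin (n1 + n2) => (x : ℕ) < n1)
        = S.filter fun x : Fin (n1 + n2) => (x : ℕ) < n1 := by
    intro S
    rw [filter_erase]
    apply erase_eq_of_notMem
    simp [hip]
  unfold swingCountCard
  split_ifs with hs
  · subst hs
    have hset : {S : Finset (Fin (n1 + n2)) | S.card = a + b' ∧ i ∈ S ∧
        BipWinning n1 n2 a b' S ∧ ¬ BipWinning n1 n2 a b' (S.erase i)}
        = ((univ.filter fun S : Finset (Fin (n1 + n2)) =>
          i ∈ S ∧ S.card = a + b' ∧
            a ≤ (S.filter fun x : Fin (n1 + n2) => (x : ℕ) < n1).card : Finset _) : Set _) := by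
      ext S
      simp only [Set.mem_setOf_eq, coe_filter, mem_univ, true_and, Set.mem_setOf_eq]
      unfold BipWinning
      rw [hfe]
      constructor
      · rintro ⟨h1, h2, ⟨h3, -⟩, -⟩
        exact ⟨h2, h1, h3⟩
      · rintro ⟨h2, h1, h3⟩
        have hc : (S.erase i).card = a + b' - 1 := by rw [card_erase_of_mem h2, h1]
        refine ⟨h1, h2, ⟨h3, by omega⟩, ?_⟩
        rintro ⟨-, h5⟩
        rw [hc] at h5
        have : 1 ≤ S.card := card_pos.mpr ⟨i, h2⟩
        omega
    rw [hset, Set.ncard_coe_finset]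
  · convert Set.ncard_empty (Finset (Fin (n1 + n2)))
    rw [Set.eq_empty_iff_forall_notMem]
    rintro S ⟨h1, h2, ⟨h3, h4⟩, h5⟩
    apply h5
    unfold BipWinning at *
    rw [hfe]
    refine ⟨h3, ?_⟩
    rw [card_erase_of_mem h2, h1]
    rcases Nat.lt_or_ge (a + b') s with h | h
    · omega
    · omega

lemma choose_helper (t k : ℕ) : (k + 1) * t.choose (k + 1) = t * (t - 1).choose k := by
  cases t with
  | zero => simp
  | succ t =>
    simp only [Nat.succ_sub_one]
    rw [mul_comm]
    exact (Nat.add_one_mul_choose_eq t k).symm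

lemma choose_helper2 (t k : ℕ) : (t - k) * t.choose k = t * (t - 1).choose k := by
  rw [← choose_helper t k, mul_comm (t - k), ← Nat.choose_succ_right_eq, mul_comm]

lemma SS_eval (n1 n2 a b' : ℕ) (i : Fin (n1 + n2)) (hi : n1 ≤ (i : ℕ)) (ha : 1 ≤ a)
    (hm : a + b' ≤ n1 + n2) :
    SSindex (BipWinning n1 n2 a b') i =
      ((a + b' - 1).factorial : ℚ) * ((n1 + n2 - (a + b')).factorial : ℚ)
        / ((n1 + n2).factorial : ℚ)
        * ((∑ j ∈ Icc a (a + b' - 1), n1.choose j * (n2 - 1).choose (a + b' - 1 - j) : ℕ) : ℚ) := by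
  unfold SSindex
  rw [Finset.sum_eq_single_of_mem (a + b') (by rw [mem_Icc]; omega)]
  · rw [swing_eq n1 n2 a b' _ i hi, if_pos rfl, N_count n1 n2 a (a + b') i hi ha]
  · intro s _ hne
    rw [swing_eq n1 n2 a b' s i hi, if_neg hne]
    simp

lemma key_identity (n1 n2 a b : ℕ) (ha : 1 ≤ a) (ha' : a ≤ n1) (hb : 1 ≤ b) (hn2 : 1 ≤ n2)
    (hmn : a + b + 1 ≤ n1 + n2) :
    (a + b - 1) * ∑ j ∈ Icc a (a + b - 1), n1.choose j * (n2 - 1).choose (a + b - 1 - j)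
      = n1 * ((n1 - 1).choose (a - 1) * (n2 - 1).choose (b - 1))
        + (n1 + n2 - (a + b) + 1) *
            ∑ j ∈ Icc a (a + b - 2), n1.choose j * (n2 - 1).choose (a + b - 2 - j) := by
  obtain ⟨c, hc⟩ : ∃ c, a + b = c + 2 := ⟨a + b - 2, by omega⟩
  rw [hc]
  simp only [show c + 2 - 1 = c + 1 from rfl, show c + 2 - 2 = c from rfl]
  have hac : a ≤ c + 1 := by omega
  -- split LHS
  rw [Finset.mul_sum]
  have lhs_split : ∑ j ∈ Icc a (c + 1), (c + 1) * (n1.choose j * (n2 - 1).choose (c + 1 - j))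
      = (∑ j ∈ Icc a (c + 1), n1 * ((n1 - 1).choose (j - 1) * (n2 - 1).choose (c + 1 - j)))
        + ∑ j ∈ Icc a (c + 1), (c + 1 - j) * (n1.choose j * (n2 - 1).choose (c + 1 - j)) := by
    rw [← Finset.sum_add_distrib]
    apply sum_congr rfl
    intro j hj
    rw [mem_Icc] at hj
    obtain ⟨k, rfl⟩ : ∃ k, j = k + 1 := ⟨j - 1, by omega⟩
    have e1 : c + 1 - (k + 1) = c - k := by omega
    have e2 : (k + 1 : ℕ) - 1 = k := by omega
    rw [e1, e2]
    have h1 : (k + 1) * n1.choose (k + 1) = n1 * (n1 - 1).choose k := choose_helper n1 k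
    have hsplit : (c + 1) = (k + 1) + (c - k) := by omega
    calc (c + 1) * (n1.choose (k + 1) * (n2 - 1).choose (c - k))
        = (k + 1) * n1.choose (k + 1) * (n2 - 1).choose (c - k)
          + (c - k) * (n1.choose (k + 1) * (n2 - 1).choose (c - k)) := by
          rw [hsplit]; ring
      _ = n1 * ((n1 - 1).choose k * (n2 - 1).choose (c - k))
          + (c - k) * (n1.choose (k + 1) * (n2 - 1).choose (c - k)) := by rw [h1]; ring
  rw [lhs_split]
  -- second summand: drop top term and rewrite
  have hB : ∑ j ∈ Icc a (c + 1), (c + 1 - j) * (n1.choose j * (n2 - 1).choose (c + 1 - j))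
      = ∑ j ∈ Icc a c, (n2 - 1) * (n1.choose j * (n2 - 2).choose (c - j)) := by
    rw [Finset.sum_Icc_succ_top hac]
    simp only [Nat.sub_self, zero_mul, add_zero]
    apply sum_congr rfl
    intro j hj
    rw [mem_Icc] at hj
    have e1 : c + 1 - j = (c - j) + 1 := by omega
    rw [e1]
    have h1 : ((c - j) + 1) * (n2 - 1).choose ((c - j) + 1)
        = (n2 - 1) * (n2 - 1 - 1).choose (c - j) := choose_helper (n2 - 1) (c - j)
    have e2 : n2 - 1 - 1 = n2 - 2 := by omega
    rw [e2] at h1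
    calc ((c - j) + 1) * (n1.choose j * (n2 - 1).choose ((c - j) + 1))
        = n1.choose j * (((c - j) + 1) * (n2 - 1).choose ((c - j) + 1)) := by ring
      _ = n1.choose j * ((n2 - 1) * (n2 - 2).choose (c - j)) := by rw [h1]
      _ = (n2 - 1) * (n1.choose j * (n2 - 2).choose (c - j)) := by ring
  rw [hB]
  -- first summand: telescope
  have hA : ∑ j ∈ Icc a (c + 1), n1 * ((n1 - 1).choose (j - 1) * (n2 - 1).choose (c + 1 - j))
      = n1 * ((n1 - 1).choose (a - 1) * (n2 - 1).choose (b - 1))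
        + ∑ j ∈ Icc a c, n1 * ((n1 - 1).choose j * (n2 - 1).choose (c - j)) := by
    have hins : Icc a (c + 1) = insert a (Icc (a + 1) (c + 1)) := by
      ext x
      simp only [mem_Icc, mem_insert]
      omega
    rw [hins, Finset.sum_insert (by rw [mem_Icc]; omega)]
    have e1 : c + 1 - a = b - 1 := by omega
    rw [e1]
    congr 1
    apply Finset.sum_bij' (i := fun (j : ℕ) _ => j - 1) (j := fun (j : ℕ) _ => j + 1)
    · intro j hj; rw [mem_Icc] at *; omega
    · intro j hj; rw [mem_Icc] at *; omega
    · intro j hj; rw [mem_Icc] at hj; omega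
    · intro j hj; rw [mem_Icc] at hj; omega
    · intro j hj
      rw [mem_Icc] at hj
      obtain ⟨k, rfl⟩ : ∃ k, j = k + 1 := ⟨j - 1, by omega⟩
      have e2 : (k + 1 : ℕ) - 1 = k := by omega
      have e3 : c + 1 - (k + 1) = c - k := by omega
      rw [e2, e3]
  rw [hA]
  -- RHS: termwise split of the coefficient
  have hR : (n1 + n2 - (c + 2) + 1) * ∑ j ∈ Icc a c, n1.choose j * (n2 - 1).choose (c - j)
      = (∑ j ∈ Icc a c, n1 * ((n1 - 1).choose j * (n2 - 1).choose (c - j)))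
        + ∑ j ∈ Icc a c, (n2 - 1) * (n1.choose j * (n2 - 2).choose (c - j)) := by
    rw [Finset.mul_sum, ← Finset.sum_add_distrib]
    apply sum_congr rfl
    intro j hj
    rw [mem_Icc] at hj
    by_cases h1 : j ≤ n1
    · by_cases h2 : c - j ≤ n2 - 1
      · have hco : n1 + n2 - (c + 2) + 1 = (n1 - j) + ((n2 - 1) - (c - j)) := by omega
        have k1 : (n1 - j) * n1.choose j = n1 * (n1 - 1).choose j := choose_helper2 n1 j
        have k2 : ((n2 - 1) - (c - j)) * (n2 - 1).choose (c - j)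
            = (n2 - 1) * (n2 - 1 - 1).choose (c - j) := choose_helper2 (n2 - 1) (c - j)
        have e2 : n2 - 1 - 1 = n2 - 2 := by omega
        rw [e2] at k2
        calc (n1 + n2 - (c + 2) + 1) * (n1.choose j * (n2 - 1).choose (c - j))
            = (n1 - j) * n1.choose j * (n2 - 1).choose (c - j)
              + (((n2 - 1) - (c - j)) * (n2 - 1).choose (c - j)) * n1.choose j := by
              rw [hco]; ring
          _ = n1 * ((n1 - 1).choose j * (n2 - 1).choose (c - j))
              + (n2 - 1) * (n1.choose j * (n2 - 2).choose (c - j)) := by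
              rw [k1, k2]; ring
      · have : (n2 - 1).choose (c - j) = 0 := Nat.choose_eq_zero_of_lt (by omega)
        have h2' : (n2 - 2).choose (c - j) = 0 := Nat.choose_eq_zero_of_lt (by omega)
        simp [this, h2']
    · have : n1.choose j = 0 := Nat.choose_eq_zero_of_lt (by omega)
      have h1' : (n1 - 1).choose j = 0 := Nat.choose_eq_zero_of_lt (by omega)
      simp [this, h1']
  rw [hR]
  ring

theorem SS_index_type_two_increasing_in_b (n1 n2 a b : ℕ) (hn1 : 1 ≤ n1) (hn2 : 1 ≤ n2)
    (ha : 1 ≤ a) (ha' : a ≤ n1) (hb : 1 ≤ b) (hb' : b ≤ n2 - 1)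
    (i : Fin (n1 + n2)) (hi : n1 ≤ (i : ℕ)) :
    SSindex (BipWinning n1 n2 a b) i - SSindex (BipWinning n1 n2 a (b - 1)) i =
      ((Nat.factorial (a + b - 2) * Nat.factorial (n1 + n2 - a - b) * n1 *
        Nat.choose (n1 - 1) (a - 1) * Nat.choose (n2 - 1) (b - 1) : ℕ) : ℚ) /
        (Nat.factorial (n1 + n2) : ℚ) ∧
    SSindex (BipWinning n1 n2 a (b - 1)) i < SSindex (BipWinning n1 n2 a b) i := by
  have hmn : a + b + 1 ≤ n1 + n2 := by omega
  have h1 := SS_eval n1 n2 a b i hi ha (by omega)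
  have h2 := SS_eval n1 n2 a (b - 1) i hi ha (by omega)
  rw [show a + (b - 1) = a + b - 1 from by omega] at h2
  rw [show a + b - 1 - 1 = a + b - 2 from by omega] at h2
  set Nb := ∑ j ∈ Icc a (a + b - 1), n1.choose j * (n2 - 1).choose (a + b - 1 - j) with hNb
  set N' := ∑ j ∈ Icc a (a + b - 2), n1.choose j * (n2 - 1).choose (a + b - 2 - j) with hN'
  have f1 : (a + b - 1).factorial = (a + b - 1) * (a + b - 2).factorial := by
    have := Nat.mul_factorial_pred (n := a + b - 1) (by omega)
    rw [show a + b - 1 - 1 = a + b - 2 from by omega] at this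
    omega
  have f2 : (n1 + n2 - (a + b - 1)).factorial
      = (n1 + n2 - (a + b) + 1) * (n1 + n2 - (a + b)).factorial := by
    have := Nat.mul_factorial_pred (n := n1 + n2 - (a + b) + 1) (by omega)
    rw [show n1 + n2 - (a + b) + 1 - 1 = n1 + n2 - (a + b) from by omega] at this
    rw [show n1 + n2 - (a + b - 1) = n1 + n2 - (a + b) + 1 from by omega]
    omega
  have ki := key_identity n1 n2 a b ha ha' hb hn2 hmn
  rw [← hNb, ← hN'] at ki
  have natkey : (a + b - 1).factorial * (n1 + n2 - (a + b)).factorial * Nb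
      = (a + b - 2).factorial * (n1 + n2 - (a + b)).factorial *
          (n1 * ((n1 - 1).choose (a - 1) * (n2 - 1).choose (b - 1)))
        + (a + b - 2).factorial * (n1 + n2 - (a + b - 1)).factorial * N' := by
    calc (a + b - 1).factorial * (n1 + n2 - (a + b)).factorial * Nb
        = (a + b - 2).factorial * (n1 + n2 - (a + b)).factorial * ((a + b - 1) * Nb) := by
          rw [f1]; ring
      _ = (a + b - 2).factorial * (n1 + n2 - (a + b)).factorial *
            (n1 * ((n1 - 1).choose (a - 1) * (n2 - 1).choose (b - 1))
              + (n1 + n2 - (a + b) + 1) * N') := by rw [ki]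
      _ = _ := by rw [f2]; ring
  have qkey := congrArg (Nat.cast : ℕ → ℚ) natkey
  push_cast at qkey
  have hfacpos : (0 : ℚ) < ((n1 + n2).factorial : ℚ) := by
    exact_mod_cast (n1 + n2).factorial_pos
  have hdiff : SSindex (BipWinning n1 n2 a b) i - SSindex (BipWinning n1 n2 a (b - 1)) i =
      ((Nat.factorial (a + b - 2) * Nat.factorial (n1 + n2 - a - b) * n1 *
        Nat.choose (n1 - 1) (a - 1) * Nat.choose (n2 - 1) (b - 1) : ℕ) : ℚ) /
        (Nat.factorial (n1 + n2) : ℚ) := by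
    rw [h1, h2]
    rw [div_mul_eq_mul_div, div_mul_eq_mul_div, div_sub_div_same]
    rw [div_eq_div_iff (ne_of_gt hfacpos) (ne_of_gt hfacpos)]
    rw [show n1 + n2 - a - b = n1 + n2 - (a + b) from by omega]
    push_cast
    linear_combination ((n1 + n2).factorial : ℚ) * qkey
  refine ⟨hdiff, ?_⟩
  have hpos : (0 : ℚ) < ((Nat.factorial (a + b - 2) * Nat.factorial (n1 + n2 - a - b) * n1 *
      Nat.choose (n1 - 1) (a - 1) * Nat.choose (n2 - 1) (b - 1) : ℕ) : ℚ) := by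
    have : 0 < Nat.factorial (a + b - 2) * Nat.factorial (n1 + n2 - a - b) * n1 *
        Nat.choose (n1 - 1) (a - 1) * Nat.choose (n2 - 1) (b - 1) :=
      Nat.mul_pos (Nat.mul_pos (Nat.mul_pos (Nat.mul_pos (Nat.factorial_pos _)
        (Nat.factorial_pos _)) (by omega)) (Nat.choose_pos (by omega))) (Nat.choose_pos (by omega))
    exact_mod_cast this
  rw [← sub_pos, hdiff]
  exact div_pos hpos hfacpos
end

section
/- Fix integers n₁, n₂ ≥ 1 and let (m₁,m₂), (m₁′,m₂′) be two different pairs with 1 ≤ m₁, m₁′ ≤ n₁ and 0 ≤ m₂, m₂′ ≤ n₂ − 1. If m₁ ≥ m₁′ and m₂ ≤ m₂′, then SS₂(m₁,m₂,n₁,n₂) ≤ SS₂(m₁′,m₂′,n₁,n₂) and SS₁(m₁,m₂,n₁,n₂) ≥ SS₁(m₁′,m₂′,n₁,n₂), and equality holds (in either inequality) if and only if m₂ = m₂′ = 0. -/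
open Finset

instance BipWinning.dec (n1 n2 a b : ℕ) : DecidablePred (BipWinning n1 n2 a b) := fun S => by
  unfold BipWinning; infer_instance

/-- weight in the SS index -/
noncomputable def wgt (n s : ℕ) : ℚ :=
  (Nat.factorial (s - 1) : ℚ) * (Nat.factorial (n - s) : ℚ) / (Nat.factorial n : ℚ)

lemma wgt_pos {n s : ℕ} : 0 < wgt n s := by
  unfold wgt
  positivity

lemma swingCountCard_eq_card (n : ℕ) (Win : Finset (Fin n) → Prop) [DecidablePred Win]
    (i : Fin n) (s : ℕ) :
    swingCountCard Win i s
      = (univ.filter fun S : Finset (Fin n) => S.card = s ∧ i ∈ S ∧ Win S ∧ ¬ Win (S.erase i)).card := by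
  rw [swingCountCard, Set.ncard_eq_toFinset_card']
  simp [Set.toFinset_setOf]

/-- the swing coalitions (without the cardinality-s restriction) of a type-2 player -/
def Aset (n1 n2 a b : ℕ) (j : Fin (n1 + n2)) : Finset (Finset (Fin (n1 + n2))) :=
  univ.filter fun S => j ∈ S ∧ S.card = a + b ∧ a ≤ (S.filter fun i : Fin (n1 + n2) => (i : ℕ) < n1).card

lemma erase_t1 (n1 n2 : ℕ) (S : Finset (Fin (n1 + n2))) (j : Fin (n1 + n2)) (hj : n1 ≤ (j : ℕ)) :
    ((S.erase j).filter fun i : Fin (n1 + n2) => (i : ℕ) < n1) = S.filter fun i : Fin (n1 + n2) => (i : ℕ) < n1 := by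
  rw [Finset.filter_erase, Finset.erase_eq_of_notMem]
  simp only [mem_filter]
  rintro ⟨-, h⟩
  omega

lemma swingCountCard_type2 (n1 n2 a b : ℕ) (j : Fin (n1 + n2)) (hj : n1 ≤ (j : ℕ)) (ha : 1 ≤ a) (s : ℕ) :
    swingCountCard (BipWinning n1 n2 a b) j s
      = if s = a + b then (Aset n1 n2 a b j).card else 0 := by
  rw [swingCountCard_eq_card]
  split_ifs with hs
  · subst hs
    congr 1
    apply Finset.filter_congr
    intro S _
    unfold BipWinning
    rw [erase_t1 n1 n2 S j hj]
    constructor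
    · rintro ⟨hc, hjS, ⟨h1, h2⟩, h3⟩
      exact ⟨hjS, hc, h1⟩
    · rintro ⟨hjS, hc, h1⟩
      refine ⟨hc, hjS, ⟨h1, by omega⟩, ?_⟩
      rw [Finset.card_erase_of_mem hjS]
      rintro ⟨-, h⟩
      omega
  · rw [Finset.card_eq_zero, Finset.filter_eq_empty_iff]
    rintro S - ⟨hc, hjS, ⟨h1, h2⟩, h3⟩
    unfold BipWinning at h3
    rw [erase_t1 n1 n2 S j hj, Finset.card_erase_of_mem hjS] at h3
    apply h3
    constructor
    · exact h1
    · -- a + b ≤ S.card - 1 since S.card = s ≠ a + b and a + b ≤ S.card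
      omega

lemma SSindex_type2 (n1 n2 a b : ℕ) (j : Fin (n1 + n2)) (hj : n1 ≤ (j : ℕ))
    (ha : 1 ≤ a) (hab : a + b ≤ n1 + n2) :
    SSindex (BipWinning n1 n2 a b) j = wgt (n1 + n2) (a + b) * (Aset n1 n2 a b j).card := by
  unfold SSindex
  have : ∀ s ∈ Finset.Icc 1 (n1 + n2),
      ((Nat.factorial (s - 1) : ℚ) * (Nat.factorial (n1 + n2 - s) : ℚ)
        / (Nat.factorial (n1 + n2) : ℚ)) * (swingCountCard (BipWinning n1 n2 a b) j s : ℚ)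
      = if s = a + b then wgt (n1 + n2) (a + b) * (Aset n1 n2 a b j).card else 0 := by
    intro s _
    rw [swingCountCard_type2 n1 n2 a b j hj ha s]
    split_ifs with hs
    · subst hs; rfl
    · simp
  rw [Finset.sum_congr rfl this, Finset.sum_ite_eq' (Finset.Icc 1 (n1 + n2)) (a + b)]
  rw [if_pos (by simp; omega)]

lemma card_type1 (n1 n2 : ℕ) (hn2 : 1 ≤ n2) :
    ((univ : Finset (Fin (n1 + n2))).filter fun i : Fin (n1 + n2) => (i : ℕ) < n1).card = n1 := by
  have h : n1 < n1 + n2 := by omega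
  have : ((univ : Finset (Fin (n1 + n2))).filter fun i : Fin (n1 + n2) => (i : ℕ) < n1)
      = Iio ⟨n1, h⟩ := by
    ext i; simp [Fin.lt_def]
  rw [this, Fin.card_Iio]

lemma card_type2 (n1 n2 : ℕ) (hn2 : 1 ≤ n2) :
    ((univ : Finset (Fin (n1 + n2))).filter fun i : Fin (n1 + n2) => ¬ ((i : ℕ) < n1)).card = n2 := by
  have h := Finset.card_filter_add_card_filter_not
    (s := (univ : Finset (Fin (n1 + n2)))) (p := fun i : Fin (n1 + n2) => (i : ℕ) < n1)
  rw [card_type1 n1 n2 hn2, Finset.card_univ, Fintype.card_fin] at h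
  omega

lemma exists_coalition (n1 n2 : ℕ) (j : Fin (n1 + n2)) (hj : n1 ≤ (j : ℕ)) (p q : ℕ)
    (hp : p ≤ n1) (hq : q + 1 ≤ n2) :
    ∃ S : Finset (Fin (n1 + n2)), j ∈ S ∧ S.card = p + q + 1 ∧
      (S.filter fun i : Fin (n1 + n2) => (i : ℕ) < n1).card = p ∧
      (S.filter fun i : Fin (n1 + n2) => ¬ ((i : ℕ) < n1)).card = q + 1 := by
  have hn2 : 1 ≤ n2 := by omega
  obtain ⟨B1, hB1sub, hB1card⟩ := Finset.exists_subset_card_eq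
    (s := (univ : Finset (Fin (n1 + n2))).filter fun i : Fin (n1 + n2) => (i : ℕ) < n1) (n := p)
    (by rw [card_type1 n1 n2 hn2]; exact hp)
  obtain ⟨B2, hB2sub, hB2card⟩ := Finset.exists_subset_card_eq
    (s := ((univ : Finset (Fin (n1 + n2))).filter fun i : Fin (n1 + n2) => ¬ ((i : ℕ) < n1)).erase j) (n := q)
    (by
      rw [Finset.card_erase_of_mem (by simp; omega), card_type2 n1 n2 hn2]
      omega)
  have hB1t : ∀ x ∈ B1, (x : ℕ) < n1 := fun x hx => (Finset.mem_filter.1 (hB1sub hx)).2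
  have hB2t : ∀ x ∈ B2, ¬ ((x : ℕ) < n1) ∧ x ≠ j := fun x hx => by
    have := hB2sub hx
    rw [Finset.mem_erase] at this
    exact ⟨(Finset.mem_filter.1 this.2).2, this.1⟩
  refine ⟨insert j (B1 ∪ B2), Finset.mem_insert_self _ _, ?_, ?_, ?_⟩
  · rw [Finset.card_insert_of_notMem, Finset.card_union_of_disjoint, hB1card, hB2card]
    · exact Finset.disjoint_left.2 fun x hx1 hx2 => (hB2t x hx2).1 (hB1t x hx1)
    · simp only [Finset.mem_union]
      rintro (h | h)
      · exact absurd (hB1t j h) (by omega)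
      · exact (hB2t j h).2 rfl
  · rw [Finset.filter_insert, if_neg (by omega), Finset.filter_union,
      Finset.filter_true_of_mem hB1t, Finset.filter_false_of_mem (fun x hx => (hB2t x hx).1),
      Finset.union_empty, hB1card]
  · rw [Finset.filter_insert, if_pos (by omega), Finset.filter_union,
      Finset.filter_false_of_mem (fun x hx => by simpa using hB1t x hx),
      Finset.filter_true_of_mem (fun x hx => (hB2t x hx).1),
      Finset.empty_union, Finset.card_insert_of_notMem (fun h => (hB2t j h).2 rfl), hB2card]

/-- pairs (S, x) with S a swing coalition and x ∉ S -/
def Pset (n1 n2 a b : ℕ) (j : Fin (n1 + n2)) :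
    Finset (Σ _ : Finset (Fin (n1 + n2)), Fin (n1 + n2)) :=
  (Aset n1 n2 a b j).sigma fun S => Sᶜ

/-- pairs (T, x) with T a swing coalition and x ∈ T, x ≠ j -/
def Qset (n1 n2 a b : ℕ) (j : Fin (n1 + n2)) :
    Finset (Σ _ : Finset (Fin (n1 + n2)), Fin (n1 + n2)) :=
  (Aset n1 n2 a b j).sigma fun T => T.erase j

lemma mem_Aset_iff (n1 n2 a b : ℕ) (j : Fin (n1 + n2)) (S : Finset (Fin (n1 + n2))) :
    S ∈ Aset n1 n2 a b j ↔ j ∈ S ∧ S.card = a + b ∧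
      a ≤ (S.filter fun i : Fin (n1 + n2) => (i : ℕ) < n1).card := by
  simp [Aset]

lemma card_Pset (n1 n2 a b : ℕ) (j : Fin (n1 + n2)) :
    (Pset n1 n2 a b j).card = (n1 + n2 - (a + b)) * (Aset n1 n2 a b j).card := by
  have h : ∀ S ∈ Aset n1 n2 a b j, Sᶜ.card = n1 + n2 - (a + b) := fun S hS => by
    rw [Finset.card_compl, Fintype.card_fin, ((mem_Aset_iff n1 n2 a b j S).1 hS).2.1]
  rw [Pset, Finset.card_sigma, Finset.sum_congr rfl h, Finset.sum_const, smul_eq_mul, mul_comm]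

lemma card_Qset (n1 n2 a b : ℕ) (j : Fin (n1 + n2)) :
    (Qset n1 n2 a b j).card = (a + b - 1) * (Aset n1 n2 a b j).card := by
  have h : ∀ S ∈ Aset n1 n2 a b j, (S.erase j).card = a + b - 1 := fun S hS => by
    obtain ⟨hj, hc, -⟩ := (mem_Aset_iff n1 n2 a b j S).1 hS
    rw [Finset.card_erase_of_mem hj, hc]
  rw [Qset, Finset.card_sigma, Finset.sum_congr rfl h, Finset.sum_const, smul_eq_mul, mul_comm]

/-- the insertion map for the b-step -/
def bmap (n1 n2 : ℕ) (x : Σ _ : Finset (Fin (n1 + n2)), Fin (n1 + n2)) :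
    Σ _ : Finset (Fin (n1 + n2)), Fin (n1 + n2) :=
  ⟨insert x.2 x.1, x.2⟩

lemma bmap_maps (n1 n2 a b : ℕ) (j : Fin (n1 + n2)) :
    ∀ x ∈ Pset n1 n2 a b j, bmap n1 n2 x ∈ Qset n1 n2 a (b + 1) j := by
  rintro ⟨S, y⟩ hx
  rw [Pset, Finset.mem_sigma] at hx
  obtain ⟨hS, hy⟩ := hx
  rw [Finset.mem_compl] at hy
  obtain ⟨hjS, hcard, ht1⟩ := (mem_Aset_iff n1 n2 a b j S).1 hS
  rw [Qset, Finset.mem_sigma]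
  dsimp only [bmap]
  constructor
  · rw [mem_Aset_iff]
    refine ⟨Finset.mem_insert_of_mem hjS, ?_, ?_⟩
    · rw [Finset.card_insert_of_notMem hy, hcard]; omega
    · exact le_trans ht1 (Finset.card_le_card
        (Finset.filter_subset_filter _ (Finset.subset_insert y S)))
  · exact Finset.mem_erase.2 ⟨fun h => hy (h ▸ hjS), Finset.mem_insert_self y S⟩

lemma bmap_injOn (n1 n2 a b : ℕ) (j : Fin (n1 + n2)) :
    Set.InjOn (bmap n1 n2) (Pset n1 n2 a b j) := by
  rintro ⟨S, y⟩ hx ⟨S', y'⟩ hx' h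
  rw [Finset.mem_coe, Pset, Finset.mem_sigma, Finset.mem_compl] at hx hx'
  rw [bmap, bmap, Sigma.mk.inj_iff] at h
  obtain ⟨h1, h2⟩ := h
  have hy : y = y' := eq_of_heq h2
  subst hy
  dsimp only at hx hx' h1
  have : S = S' := by
    rw [← Finset.erase_insert hx.2, ← Finset.erase_insert hx'.2, h1]
  subst this
  rfl

/-- the erasure map for the a-step -/
def amap (n1 n2 : ℕ) (x : Σ _ : Finset (Fin (n1 + n2)), Fin (n1 + n2)) :
    Σ _ : Finset (Fin (n1 + n2)), Fin (n1 + n2) :=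
  ⟨x.1.erase x.2, x.2⟩

lemma amap_maps (n1 n2 a b : ℕ) (j : Fin (n1 + n2)) :
    ∀ x ∈ Qset n1 n2 (a + 1) b j, amap n1 n2 x ∈ Pset n1 n2 a b j := by
  rintro ⟨T, y⟩ hx
  rw [Qset, Finset.mem_sigma, Finset.mem_erase] at hx
  obtain ⟨hT, hyj, hyT⟩ := hx
  obtain ⟨hjT, hcard, ht1⟩ := (mem_Aset_iff n1 n2 (a + 1) b j T).1 hT
  rw [Pset, Finset.mem_sigma]
  dsimp only [amap]
  rw [Finset.mem_compl]
  constructor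
  · rw [mem_Aset_iff]
    refine ⟨Finset.mem_erase.2 ⟨fun h => hyj h.symm, hjT⟩, ?_, ?_⟩
    · rw [Finset.card_erase_of_mem hyT, hcard]; omega
    · rw [Finset.filter_erase]
      have := Finset.pred_card_le_card_erase
        (s := T.filter fun i : Fin (n1 + n2) => (i : ℕ) < n1) (a := y)
      omega
  · exact Finset.notMem_erase y T

lemma amap_injOn (n1 n2 a b : ℕ) (j : Fin (n1 + n2)) :
    Set.InjOn (amap n1 n2) (Qset n1 n2 (a + 1) b j) := by
  rintro ⟨T, y⟩ hx ⟨T', y'⟩ hx' h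
  rw [Finset.mem_coe, Qset, Finset.mem_sigma, Finset.mem_erase] at hx hx'
  rw [amap, amap, Sigma.mk.inj_iff] at h
  obtain ⟨h1, h2⟩ := h
  have hy : y = y' := eq_of_heq h2
  subst hy
  dsimp only at hx hx' h1
  have : T = T' := by
    rw [← Finset.insert_erase hx.2.2, ← Finset.insert_erase hx'.2.2, h1]
  subst this
  rfl

lemma bstep_count (n1 n2 a b : ℕ) (j : Fin (n1 + n2)) :
    (n1 + n2 - (a + b)) * (Aset n1 n2 a b j).card
      ≤ (a + b) * (Aset n1 n2 a (b + 1) j).card := by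
  have h := Finset.card_le_card_of_injOn (bmap n1 n2)
    (bmap_maps n1 n2 a b j) (bmap_injOn n1 n2 a b j)
  rw [card_Pset, card_Qset] at h
  have : a + (b + 1) - 1 = a + b := by omega
  rwa [this] at h

lemma astep_count (n1 n2 a b : ℕ) (j : Fin (n1 + n2)) :
    (a + b) * (Aset n1 n2 (a + 1) b j).card
      ≤ (n1 + n2 - (a + b)) * (Aset n1 n2 a b j).card := by
  have h := Finset.card_le_card_of_injOn (amap n1 n2)
    (amap_maps n1 n2 a b j) (amap_injOn n1 n2 a b j)
  rw [card_Pset, card_Qset] at h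
  have : a + 1 + b - 1 = a + b := by omega
  rwa [this] at h

lemma bstep_count_lt (n1 n2 a b : ℕ) (j : Fin (n1 + n2)) (hj : n1 ≤ (j : ℕ))
    (ha : 1 ≤ a) (han : a ≤ n1) (hbn : b + 1 ≤ n2) :
    (n1 + n2 - (a + b)) * (Aset n1 n2 a b j).card
      < (a + b) * (Aset n1 n2 a (b + 1) j).card := by
  obtain ⟨T0, hjT, hTcard, hTt1, hTt2⟩ := exists_coalition n1 n2 j hj a b han hbn
  have hT0 : T0 ∈ Aset n1 n2 a (b + 1) j :=
    (mem_Aset_iff n1 n2 a (b + 1) j T0).2 ⟨hjT, by omega, le_of_eq hTt1.symm⟩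
  obtain ⟨x0, hx0⟩ := Finset.card_pos.1 (show 0 < (T0.filter fun i : Fin (n1 + n2) => (i : ℕ) < n1).card by omega)
  rw [Finset.mem_filter] at hx0
  have hwitQ : (⟨T0, x0⟩ : Σ _ : Finset (Fin (n1 + n2)), Fin (n1 + n2)) ∈ Qset n1 n2 a (b + 1) j := by
    rw [Qset, Finset.mem_sigma]
    exact ⟨hT0, Finset.mem_erase.2 ⟨fun h => by have h' : (x0 : ℕ) = (j : ℕ) := congrArg Fin.val h; omega, hx0.1⟩⟩
  have hwitn : (⟨T0, x0⟩ : Σ _ : Finset (Fin (n1 + n2)), Fin (n1 + n2))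
      ∉ (Pset n1 n2 a b j).image (bmap n1 n2) := by
    intro hmem
    obtain ⟨⟨S, y⟩, hP, heq⟩ := Finset.mem_image.1 hmem
    rw [Pset, Finset.mem_sigma, Finset.mem_compl] at hP
    rw [bmap, Sigma.mk.inj_iff] at heq
    obtain ⟨h1, h2⟩ := heq
    have hy : y = x0 := eq_of_heq h2
    subst hy
    dsimp only at h1 hP
    obtain ⟨hS, hyS⟩ := hP
    obtain ⟨-, -, ht1⟩ := (mem_Aset_iff n1 n2 a b j S).1 hS
    have : (T0.filter fun i : Fin (n1 + n2) => (i : ℕ) < n1)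
        = insert y (S.filter fun i : Fin (n1 + n2) => (i : ℕ) < n1) := by
      rw [← h1, Finset.filter_insert, if_pos hx0.2]
    have hcard : (T0.filter fun i : Fin (n1 + n2) => (i : ℕ) < n1).card
        = (S.filter fun i : Fin (n1 + n2) => (i : ℕ) < n1).card + 1 := by
      rw [this, Finset.card_insert_of_notMem (fun h => hyS (Finset.mem_filter.1 h).1)]
    omega
  have hsub : (Pset n1 n2 a b j).image (bmap n1 n2) ⊆ Qset n1 n2 a (b + 1) j :=
    Finset.image_subset_iff.2 (bmap_maps n1 n2 a b j)
  have hlt : ((Pset n1 n2 a b j).image (bmap n1 n2)).card < (Qset n1 n2 a (b + 1) j).card :=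
    Finset.card_lt_card ((Finset.ssubset_iff_of_subset hsub).2 ⟨_, hwitQ, hwitn⟩)
  rw [Finset.card_image_of_injOn (bmap_injOn n1 n2 a b j), card_Pset, card_Qset] at hlt
  have : a + (b + 1) - 1 = a + b := by omega
  rwa [this] at hlt

lemma astep_count_lt (n1 n2 a b : ℕ) (j : Fin (n1 + n2)) (hj : n1 ≤ (j : ℕ))
    (ha : 1 ≤ a) (han : a ≤ n1) (hb : 1 ≤ b) (hbn : b + 1 ≤ n2) :
    (a + b) * (Aset n1 n2 (a + 1) b j).card
      < (n1 + n2 - (a + b)) * (Aset n1 n2 a b j).card := by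
  obtain ⟨b', rfl⟩ : ∃ b', b = b' + 1 := ⟨b - 1, by omega⟩
  obtain ⟨S0, hjS, hScard, hSt1, hSt2⟩ := exists_coalition n1 n2 j hj a b' han (by omega)
  have hS0 : S0 ∈ Aset n1 n2 a (b' + 1) j :=
    (mem_Aset_iff n1 n2 a (b' + 1) j S0).2 ⟨hjS, by omega, le_of_eq hSt1.symm⟩
  have hss : (S0.filter fun i : Fin (n1 + n2) => ¬ ((i : ℕ) < n1))
      ⊂ (univ : Finset (Fin (n1 + n2))).filter fun i : Fin (n1 + n2) => ¬ ((i : ℕ) < n1) := by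
    refine Finset.ssubset_iff_subset_ne.2 ⟨Finset.filter_subset_filter _ (Finset.subset_univ S0), ?_⟩
    intro h
    rw [h, card_type2 n1 n2 (by omega)] at hSt2
    omega
  obtain ⟨y0, hy0mem, hy0n⟩ := Finset.exists_of_ssubset hss
  rw [Finset.mem_filter] at hy0mem
  have hy0S : y0 ∉ S0 := fun h => hy0n (Finset.mem_filter.2 ⟨h, hy0mem.2⟩)
  have hwitP : (⟨S0, y0⟩ : Σ _ : Finset (Fin (n1 + n2)), Fin (n1 + n2)) ∈ Pset n1 n2 a (b' + 1) j := by
    rw [Pset, Finset.mem_sigma, Finset.mem_compl]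
    exact ⟨hS0, hy0S⟩
  have hwitn : (⟨S0, y0⟩ : Σ _ : Finset (Fin (n1 + n2)), Fin (n1 + n2))
      ∉ (Qset n1 n2 (a + 1) (b' + 1) j).image (amap n1 n2) := by
    intro hmem
    obtain ⟨⟨T, y⟩, hQ, heq⟩ := Finset.mem_image.1 hmem
    rw [Qset, Finset.mem_sigma, Finset.mem_erase] at hQ
    rw [amap, Sigma.mk.inj_iff] at heq
    obtain ⟨h1, h2⟩ := heq
    have hy : y = y0 := eq_of_heq h2
    subst hy
    dsimp only at h1 hQ
    obtain ⟨hT, hyj, hyT⟩ := hQ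
    obtain ⟨-, -, ht1⟩ := (mem_Aset_iff n1 n2 (a + 1) (b' + 1) j T).1 hT
    have hTeq : T = insert y S0 := by rw [← h1, Finset.insert_erase hyT]
    have : (T.filter fun i : Fin (n1 + n2) => (i : ℕ) < n1)
        = S0.filter fun i : Fin (n1 + n2) => (i : ℕ) < n1 := by
      rw [hTeq, Finset.filter_insert, if_neg hy0mem.2]
    rw [this] at ht1
    omega
  have hsub : (Qset n1 n2 (a + 1) (b' + 1) j).image (amap n1 n2) ⊆ Pset n1 n2 a (b' + 1) j :=
    Finset.image_subset_iff.2 (amap_maps n1 n2 a (b' + 1) j)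
  have hlt : ((Qset n1 n2 (a + 1) (b' + 1) j).image (amap n1 n2)).card
      < (Pset n1 n2 a (b' + 1) j).card :=
    Finset.card_lt_card ((Finset.ssubset_iff_of_subset hsub).2 ⟨_, hwitP, hwitn⟩)
  rw [Finset.card_image_of_injOn (amap_injOn n1 n2 a (b' + 1) j), card_Pset, card_Qset] at hlt
  have : a + 1 + (b' + 1) - 1 = a + (b' + 1) := by omega
  rwa [this] at hlt

lemma wgt_succ_eq (n s : ℕ) (h1 : 1 ≤ s) (h2 : s < n) :
    wgt n s * s = wgt n (s + 1) * ((n - s : ℕ) : ℚ) := by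
  obtain ⟨t, rfl⟩ : ∃ t, s = t + 1 := ⟨s - 1, by omega⟩
  obtain ⟨u, hu⟩ : ∃ u, n - (t + 1) = u + 1 := ⟨n - (t + 1) - 1, by omega⟩
  have h3 : n - (t + 1 + 1) = u := by omega
  unfold wgt
  rw [hu, h3]
  simp only [Nat.add_sub_cancel, Nat.factorial_succ]
  push_cast
  ring

lemma wgt_key (n s : ℕ) (h1 : 1 ≤ s) (h2 : s < n) (x : ℕ) :
    wgt n s * x * s = wgt n (s + 1) * (((n - s) * x : ℕ) : ℚ) := by
  push_cast
  rw [show wgt n s * (x : ℚ) * (s : ℚ) = wgt n s * (s : ℚ) * (x : ℚ) by ring,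
    wgt_succ_eq n s h1 h2]
  push_cast
  ring

lemma wgt_key2 (n s y : ℕ) : wgt n (s + 1) * y * s = wgt n (s + 1) * ((s * y : ℕ) : ℚ) := by
  push_cast; ring

lemma wgt_le_iff (n s : ℕ) (h1 : 1 ≤ s) (h2 : s < n) (x y : ℕ) :
    wgt n s * x ≤ wgt n (s + 1) * y ↔ (n - s) * x ≤ s * y := by
  have hs : (0 : ℚ) < (s : ℚ) := by exact_mod_cast h1
  rw [← mul_le_mul_iff_left₀ hs, wgt_key n s h1 h2 x, wgt_key2 n s y, mul_le_mul_iff_right₀ wgt_pos]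
  exact_mod_cast Iff.rfl

lemma wgt_lt_iff (n s : ℕ) (h1 : 1 ≤ s) (h2 : s < n) (x y : ℕ) :
    wgt n s * x < wgt n (s + 1) * y ↔ (n - s) * x < s * y := by
  have hs : (0 : ℚ) < (s : ℚ) := by exact_mod_cast h1
  rw [← mul_lt_mul_iff_left₀ hs, wgt_key n s h1 h2 x, wgt_key2 n s y, mul_lt_mul_iff_right₀ wgt_pos]
  exact_mod_cast Iff.rfl

lemma wgt_le_iff' (n s : ℕ) (h1 : 1 ≤ s) (h2 : s < n) (x y : ℕ) :
    wgt n (s + 1) * y ≤ wgt n s * x ↔ s * y ≤ (n - s) * x := by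
  have hs : (0 : ℚ) < (s : ℚ) := by exact_mod_cast h1
  rw [← mul_le_mul_iff_left₀ hs, wgt_key n s h1 h2 x, wgt_key2 n s y, mul_le_mul_iff_right₀ wgt_pos]
  exact_mod_cast Iff.rfl

lemma wgt_lt_iff' (n s : ℕ) (h1 : 1 ≤ s) (h2 : s < n) (x y : ℕ) :
    wgt n (s + 1) * y < wgt n s * x ↔ s * y < (n - s) * x := by
  have hs : (0 : ℚ) < (s : ℚ) := by exact_mod_cast h1
  rw [← mul_lt_mul_iff_left₀ hs, wgt_key n s h1 h2 x, wgt_key2 n s y, mul_lt_mul_iff_right₀ wgt_pos]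
  exact_mod_cast Iff.rfl

lemma Aset_b_zero (n1 n2 a : ℕ) (ha : 1 ≤ a) (j : Fin (n1 + n2)) (hj : n1 ≤ (j : ℕ)) :
    Aset n1 n2 a 0 j = ∅ := by
  rw [Finset.eq_empty_iff_forall_notMem]
  intro S hS
  obtain ⟨hjS, hc, ht⟩ := (mem_Aset_iff n1 n2 a 0 j S).1 hS
  have hsub : (S.filter fun i : Fin (n1 + n2) => (i : ℕ) < n1) ⊆ S.erase j := by
    intro x hx
    rw [Finset.mem_filter] at hx
    exact Finset.mem_erase.2 ⟨fun h => by
      have := congrArg Fin.val h; omega, hx.1⟩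
  have := Finset.card_le_card hsub
  rw [Finset.card_erase_of_mem hjS] at this
  omega

lemma SSindex_b_zero (n1 n2 a : ℕ) (ha : 1 ≤ a) (han : a ≤ n1) (hn2 : 1 ≤ n2)
    (j : Fin (n1 + n2)) (hj : n1 ≤ (j : ℕ)) :
    SSindex (BipWinning n1 n2 a 0) j = 0 := by
  rw [SSindex_type2 n1 n2 a 0 j hj ha (by omega), Aset_b_zero n1 n2 a ha j hj]
  simp

lemma SS2_bstep (n1 n2 a b : ℕ) (j : Fin (n1 + n2)) (hj : n1 ≤ (j : ℕ))
    (ha : 1 ≤ a) (h : a + b + 1 ≤ n1 + n2) :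
    SSindex (BipWinning n1 n2 a b) j ≤ SSindex (BipWinning n1 n2 a (b + 1)) j := by
  rw [SSindex_type2 n1 n2 a b j hj ha (by omega),
    SSindex_type2 n1 n2 a (b + 1) j hj ha (by omega),
    show a + (b + 1) = (a + b) + 1 by omega]
  exact (wgt_le_iff (n1 + n2) (a + b) (by omega) (by omega) _ _).2 (bstep_count n1 n2 a b j)

lemma SS2_bstep_lt (n1 n2 a b : ℕ) (j : Fin (n1 + n2)) (hj : n1 ≤ (j : ℕ))
    (ha : 1 ≤ a) (han : a ≤ n1) (hbn : b + 1 ≤ n2) :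
    SSindex (BipWinning n1 n2 a b) j < SSindex (BipWinning n1 n2 a (b + 1)) j := by
  rw [SSindex_type2 n1 n2 a b j hj ha (by omega),
    SSindex_type2 n1 n2 a (b + 1) j hj ha (by omega),
    show a + (b + 1) = (a + b) + 1 by omega]
  exact (wgt_lt_iff (n1 + n2) (a + b) (by omega) (by omega) _ _).2
    (bstep_count_lt n1 n2 a b j hj ha han hbn)

lemma SS2_astep (n1 n2 a b : ℕ) (j : Fin (n1 + n2)) (hj : n1 ≤ (j : ℕ))
    (ha : 1 ≤ a) (h : a + b + 1 ≤ n1 + n2) :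
    SSindex (BipWinning n1 n2 (a + 1) b) j ≤ SSindex (BipWinning n1 n2 a b) j := by
  rw [SSindex_type2 n1 n2 a b j hj ha (by omega),
    SSindex_type2 n1 n2 (a + 1) b j hj (by omega) (by omega),
    show a + 1 + b = (a + b) + 1 by omega]
  exact (wgt_le_iff' (n1 + n2) (a + b) (by omega) (by omega) _ _).2 (astep_count n1 n2 a b j)

lemma SS2_astep_lt (n1 n2 a b : ℕ) (j : Fin (n1 + n2)) (hj : n1 ≤ (j : ℕ))
    (ha : 1 ≤ a) (han : a ≤ n1) (hb : 1 ≤ b) (hbn : b + 1 ≤ n2) :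
    SSindex (BipWinning n1 n2 (a + 1) b) j < SSindex (BipWinning n1 n2 a b) j := by
  rw [SSindex_type2 n1 n2 a b j hj ha (by omega),
    SSindex_type2 n1 n2 (a + 1) b j hj (by omega) (by omega),
    show a + 1 + b = (a + b) + 1 by omega]
  exact (wgt_lt_iff' (n1 + n2) (a + b) (by omega) (by omega) _ _).2
    (astep_count_lt n1 n2 a b j hj ha han hb hbn)

lemma SS2_pos (n1 n2 a b : ℕ) (j : Fin (n1 + n2)) (hj : n1 ≤ (j : ℕ))
    (ha : 1 ≤ a) (han : a ≤ n1) (hb : 1 ≤ b) (hbn : b ≤ n2 - 1) :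
    0 < SSindex (BipWinning n1 n2 a b) j := by
  have hn2 : 1 ≤ n2 := by omega
  rw [SSindex_type2 n1 n2 a b j hj ha (by omega)]
  apply mul_pos wgt_pos
  obtain ⟨b', rfl⟩ : ∃ b', b = b' + 1 := ⟨b - 1, by omega⟩
  obtain ⟨S0, hjS, hScard, hSt1, hSt2⟩ := exists_coalition n1 n2 j hj a b' han (by omega)
  have hS0 : S0 ∈ Aset n1 n2 a (b' + 1) j :=
    (mem_Aset_iff n1 n2 a (b' + 1) j S0).2 ⟨hjS, by omega, le_of_eq hSt1.symm⟩
  have : 0 < (Aset n1 n2 a (b' + 1) j).card := Finset.card_pos.2 ⟨S0, hS0⟩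
  exact_mod_cast this

lemma SS2_mono_b (n1 n2 a b b' : ℕ) (j : Fin (n1 + n2)) (hj : n1 ≤ (j : ℕ))
    (ha : 1 ≤ a) (han : a ≤ n1) (hbb : b ≤ b') (hb' : b' ≤ n2 - 1) :
    SSindex (BipWinning n1 n2 a b) j ≤ SSindex (BipWinning n1 n2 a b') j := by
  induction b', hbb using Nat.le_induction with
  | base => exact le_rfl
  | succ k hk ih =>
    exact le_trans (ih (by omega)) (SS2_bstep n1 n2 a k j hj ha (by omega))

lemma SS2_anti_a (n1 n2 a a' b : ℕ) (j : Fin (n1 + n2)) (hj : n1 ≤ (j : ℕ))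
    (ha' : 1 ≤ a') (haa : a' ≤ a) (han : a ≤ n1) (hb : b ≤ n2 - 1) (hn2 : 1 ≤ n2) :
    SSindex (BipWinning n1 n2 a b) j ≤ SSindex (BipWinning n1 n2 a' b) j := by
  induction a, haa using Nat.le_induction with
  | base => exact le_rfl
  | succ k hk ih =>
    exact le_trans (SS2_astep n1 n2 k b j hj (by omega) (by omega)) (ih (by omega))

lemma SS2_main (n1 n2 m1 m2 m1' m2' : ℕ) (hn1 : 1 ≤ n1) (hn2 : 1 ≤ n2)
    (hm1 : 1 ≤ m1) (hm1n : m1 ≤ n1) (hm2 : m2 ≤ n2 - 1)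
    (hm1' : 1 ≤ m1') (hm1n' : m1' ≤ n1) (hm2' : m2' ≤ n2 - 1)
    (hne : (m1, m2) ≠ (m1', m2')) (hge : m1' ≤ m1) (hle : m2 ≤ m2')
    (j : Fin (n1 + n2)) (hj : n1 ≤ (j : ℕ)) :
    SSindex (BipWinning n1 n2 m1 m2) j ≤ SSindex (BipWinning n1 n2 m1' m2') j ∧
      (SSindex (BipWinning n1 n2 m1 m2) j = SSindex (BipWinning n1 n2 m1' m2') j ↔
        m2 = 0 ∧ m2' = 0) := by
  by_cases hz : m2' = 0
  · subst hz
    have hz2 : m2 = 0 := by omega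
    subst hz2
    rw [SSindex_b_zero n1 n2 m1 hm1 hm1n hn2 j hj, SSindex_b_zero n1 n2 m1' hm1' hm1n' hn2 j hj]
    exact ⟨le_rfl, by simp⟩
  · have hm2'1 : 1 ≤ m2' := by omega
    have hlt : SSindex (BipWinning n1 n2 m1 m2) j < SSindex (BipWinning n1 n2 m1' m2') j := by
      by_cases hz2 : m2 = 0
      · subst hz2
        rw [SSindex_b_zero n1 n2 m1 hm1 hm1n hn2 j hj]
        exact SS2_pos n1 n2 m1' m2' j hj hm1' hm1n' hm2'1 hm2'
      · have hm21 : 1 ≤ m2 := by omega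
        rcases lt_or_eq_of_le hle with hlt2 | heq
        · -- m2 < m2' : strict b-step at (m1', m2)
          calc SSindex (BipWinning n1 n2 m1 m2) j
              ≤ SSindex (BipWinning n1 n2 m1' m2) j :=
                SS2_anti_a n1 n2 m1 m1' m2 j hj hm1' hge hm1n hm2 hn2
            _ < SSindex (BipWinning n1 n2 m1' (m2 + 1)) j :=
                SS2_bstep_lt n1 n2 m1' m2 j hj hm1' hm1n' (by omega)
            _ ≤ SSindex (BipWinning n1 n2 m1' m2') j :=
                SS2_mono_b n1 n2 m1' (m2 + 1) m2' j hj hm1' hm1n' (by omega) hm2'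
        · -- m2 = m2', so m1' < m1 : strict a-step at a = m1'
          subst heq
          have hm1lt : m1' + 1 ≤ m1 := by
            rcases Nat.lt_or_ge m1' m1 with h | h
            · omega
            · exact absurd (by omega : m1 = m1') (fun he => hne (by rw [he]))
          calc SSindex (BipWinning n1 n2 m1 m2) j
              ≤ SSindex (BipWinning n1 n2 (m1' + 1) m2) j :=
                SS2_anti_a n1 n2 m1 (m1' + 1) m2 j hj (by omega) hm1lt hm1n hm2 hn2
            _ < SSindex (BipWinning n1 n2 m1' m2) j :=
                SS2_astep_lt n1 n2 m1' m2 j hj hm1' hm1n' hm21 (by omega)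
    exact ⟨le_of_lt hlt, by
      constructor
      · intro h; exact absurd h (ne_of_lt hlt)
      · rintro ⟨-, h⟩; exact absurd h hz⟩

lemma SSindex_eq_sum_swings (n : ℕ) (Win : Finset (Fin n) → Prop) [DecidablePred Win] (i : Fin n) :
    SSindex Win i
      = ∑ S ∈ univ.filter (fun S : Finset (Fin n) => i ∈ S ∧ Win S ∧ ¬ Win (S.erase i)),
          wgt n S.card := by
  classical
  have hsw : ∀ s, swingCountCard Win i s
      = ((univ.filter (fun S : Finset (Fin n) => i ∈ S ∧ Win S ∧ ¬ Win (S.erase i))).filter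
          (fun S => S.card = s)).card := by
    intro s
    rw [swingCountCard_eq_card]
    congr 1
    rw [Finset.filter_filter]
    apply Finset.filter_congr
    intro S _
    tauto
  have h1 : ∀ s ∈ Finset.Icc 1 n,
      ((Nat.factorial (s - 1) : ℚ) * (Nat.factorial (n - s) : ℚ) / (Nat.factorial n : ℚ))
        * (swingCountCard Win i s : ℚ)
      = ∑ S ∈ (univ.filter (fun S : Finset (Fin n) => i ∈ S ∧ Win S ∧ ¬ Win (S.erase i))).filter
          (fun S => S.card = s), wgt n S.card := by
    intro s _
    rw [hsw s]
    rw [Finset.sum_congr rfl (fun S hS => show wgt n S.card = wgt n s by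
      rw [(Finset.mem_filter.1 hS).2]), Finset.sum_const, nsmul_eq_mul, mul_comm]
    rfl
  rw [SSindex, Finset.sum_congr rfl h1]
  apply Finset.sum_fiberwise_of_maps_to
  intro S hS
  rw [Finset.mem_filter] at hS
  rw [Finset.mem_Icc]
  exact ⟨Finset.card_pos.2 ⟨i, hS.2.1⟩, le_trans (Finset.card_le_univ S) (by simp)⟩

lemma sum_SSindex_eq_one (n : ℕ) (Win : Finset (Fin n) → Prop) [DecidablePred Win]
    (hmono : ∀ (S : Finset (Fin n)) (k : Fin n), Win (S.erase k) → Win S)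
    (hN : Win univ) (h0 : ¬ Win ∅) :
    ∑ k : Fin n, SSindex Win k = 1 := by
  classical
  have hn : 1 ≤ n := by
    rcases Nat.eq_zero_or_pos n with h | h
    · subst h
      have he : (univ : Finset (Fin 0)) = ∅ := Finset.univ_eq_empty
      rw [he] at hN
      exact absurd hN h0
    · exact h
  set χ : Finset (Fin n) → ℚ := fun S => if Win S then 1 else 0 with hχ
  have step1 : ∑ k : Fin n, SSindex Win k
      = ∑ S : Finset (Fin n), ∑ k ∈ S, (wgt n S.card * χ S - wgt n S.card * χ (S.erase k)) := by
    rw [Finset.sum_congr rfl (fun k _ => SSindex_eq_sum_swings n Win k)]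
    rw [Finset.sum_congr rfl (fun k _ => Finset.sum_filter _ _)]
    rw [Finset.sum_comm]
    apply Finset.sum_congr rfl
    intro S _
    rw [← Finset.sum_filter_add_sum_filter_not univ (fun k => k ∈ S)]
    have e2 : ∑ k ∈ univ.filter (fun k => k ∉ S),
        (if k ∈ S ∧ Win S ∧ ¬ Win (S.erase k) then wgt n S.card else 0) = 0 := by
      apply Finset.sum_eq_zero
      intro k hk
      rw [Finset.mem_filter] at hk
      rw [if_neg (fun h => hk.2 h.1)]
    rw [e2, add_zero]
    have e3 : univ.filter (fun k => k ∈ S) = S := by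
      ext x; simp
    rw [e3]
    apply Finset.sum_congr rfl
    intro k hk
    by_cases hW : Win S
    · by_cases hWe : Win (S.erase k)
      · rw [if_neg (fun h => h.2.2 hWe), hχ]
        simp [hW, hWe]
      · rw [if_pos ⟨hk, hW, hWe⟩, hχ]
        simp [hW, hWe]
    · have hWe : ¬ Win (S.erase k) := fun h => hW (hmono S k h)
      rw [if_neg (fun h => hW h.2.1), hχ]
      simp [hW, hWe]
  rw [step1]
  rw [Finset.sum_congr rfl (fun (S : Finset (Fin n)) _ => Finset.sum_sub_distrib
    (s := S) (f := fun _ => wgt n S.card * χ S) (g := fun k => wgt n S.card * χ (S.erase k)))]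
  rw [Finset.sum_sub_distrib]
  have part1 : ∑ S : Finset (Fin n), ∑ _k ∈ S, wgt n S.card * χ S
      = ∑ S : Finset (Fin n), (S.card : ℚ) * (wgt n S.card * χ S) := by
    apply Finset.sum_congr rfl
    intro S _
    rw [Finset.sum_const, nsmul_eq_mul]
  have key : ∑ x ∈ univ.sigma (fun S : Finset (Fin n) => S),
        wgt n x.1.card * χ (x.1.erase x.2)
      = ∑ y ∈ univ.sigma (fun T : Finset (Fin n) => Tᶜ), wgt n (y.1.card + 1) * χ y.1 := by
    apply Finset.sum_nbij'
      (i := fun x : Σ _ : Finset (Fin n), Fin n => (⟨x.1.erase x.2, x.2⟩ : Σ _ : Finset (Fin n), Fin n))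
      (j := fun y : Σ _ : Finset (Fin n), Fin n => (⟨insert y.2 y.1, y.2⟩ : Σ _ : Finset (Fin n), Fin n))
    · rintro ⟨S, k⟩ hx
      rw [Finset.mem_sigma] at hx
      rw [Finset.mem_sigma]
      exact ⟨Finset.mem_univ _, Finset.mem_compl.2 (Finset.notMem_erase k S)⟩
    · rintro ⟨T, k⟩ hy
      rw [Finset.mem_sigma, Finset.mem_compl] at hy
      rw [Finset.mem_sigma]
      exact ⟨Finset.mem_univ _, Finset.mem_insert_self k T⟩
    · rintro ⟨S, k⟩ hx
      rw [Finset.mem_sigma] at hx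
      simp only
      congr 1
      exact Finset.insert_erase hx.2
    · rintro ⟨T, k⟩ hy
      rw [Finset.mem_sigma, Finset.mem_compl] at hy
      simp only
      congr 1
      exact Finset.erase_insert hy.2
    · rintro ⟨S, k⟩ hx
      rw [Finset.mem_sigma] at hx
      simp only
      rw [Finset.card_erase_add_one hx.2]
  have part2 : ∑ S : Finset (Fin n), ∑ k ∈ S, wgt n S.card * χ (S.erase k)
      = ∑ S : Finset (Fin n), ((n - S.card : ℕ) : ℚ) * (wgt n (S.card + 1) * χ S) := by
    rw [← Finset.sum_sigma univ (fun S : Finset (Fin n) => S)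
      (fun x => wgt n x.1.card * χ (x.1.erase x.2))]
    rw [key]
    rw [Finset.sum_sigma univ (fun T : Finset (Fin n) => Tᶜ)
      (fun y => wgt n (y.1.card + 1) * χ y.1)]
    apply Finset.sum_congr rfl
    intro S _
    dsimp only
    rw [Finset.sum_const, Finset.card_compl, nsmul_eq_mul, Fintype.card_fin]
  rw [part1, part2, ← Finset.sum_sub_distrib]
  have final : ∀ S : Finset (Fin n),
      (S.card : ℚ) * (wgt n S.card * χ S) - ((n - S.card : ℕ) : ℚ) * (wgt n (S.card + 1) * χ S)
      = if S = univ then 1 else 0 := by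
    intro S
    split_ifs with hS
    · subst hS
      rw [hχ]
      simp only [if_pos hN, mul_one, Finset.card_univ, Fintype.card_fin, Nat.sub_self,
        Nat.cast_zero, zero_mul, sub_zero]
      unfold wgt
      rw [Nat.sub_self]
      simp only [Nat.factorial_zero, Nat.cast_one, mul_one]
      have hfac : ((n.factorial : ℚ)) ≠ 0 := by exact_mod_cast (Nat.factorial_pos n).ne'
      field_simp
      exact_mod_cast Nat.mul_factorial_pred (by omega)
    · have hlt : S.card < n := by
        have := Finset.card_lt_card (Finset.ssubset_univ_iff.2 hS)
        simpa using this
      by_cases hW : Win S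
      · have hne : S ≠ ∅ := fun h => h0 (h ▸ hW)
        have h1 : 1 ≤ S.card := Finset.card_pos.2 (Finset.nonempty_iff_ne_empty.2 hne)
        rw [hχ]
        simp only [if_pos hW, mul_one]
        linear_combination wgt_succ_eq n S.card h1 hlt
      · rw [hχ]
        simp [hW]
  rw [Finset.sum_congr rfl (fun S _ => final S), Finset.sum_ite_eq' univ (univ : Finset (Fin n))]
  simp

lemma map_erase_equiv (n : ℕ) (τ : Equiv.Perm (Fin n)) (S : Finset (Fin n)) (x : Fin n) :
    (S.map τ.toEmbedding).erase (τ x) = (S.erase x).map τ.toEmbedding := by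
  ext y
  simp only [Finset.mem_erase, Finset.mem_map_equiv]
  have : y ≠ τ x ↔ τ.symm y ≠ x := by
    rw [ne_eq, ne_eq, Equiv.symm_apply_eq]
  tauto

lemma swingCountCard_equiv (n : ℕ) (σ : Equiv.Perm (Fin n)) (Win : Finset (Fin n) → Prop)
    (hW : ∀ S : Finset (Fin n), Win (S.map σ.toEmbedding) ↔ Win S) (i : Fin n) (s : ℕ) :
    swingCountCard Win (σ i) s = swingCountCard Win i s := by
  classical
  have hmm : ∀ T : Finset (Fin n), (T.map σ.symm.toEmbedding).map σ.toEmbedding = T := by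
    intro T; rw [Finset.map_map]; ext y; simp
  have hW' : ∀ T : Finset (Fin n), Win (T.map σ.symm.toEmbedding) ↔ Win T := by
    intro T
    rw [← hW (T.map σ.symm.toEmbedding), hmm T]
  have hset : {S : Finset (Fin n) | S.card = s ∧ σ i ∈ S ∧ Win S ∧ ¬ Win (S.erase (σ i))}
      = (fun S : Finset (Fin n) => S.map σ.toEmbedding) ''
          {S : Finset (Fin n) | S.card = s ∧ i ∈ S ∧ Win S ∧ ¬ Win (S.erase i)} := by
    ext T
    simp only [Set.mem_image, Set.mem_setOf_eq]
    constructor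
    · rintro ⟨h1, h2, h3, h4⟩
      refine ⟨T.map σ.symm.toEmbedding, ⟨?_, ?_, (hW' T).2 h3, ?_⟩, hmm T⟩
      · rw [Finset.card_map]; exact h1
      · rw [Finset.mem_map_equiv]; simpa using h2
      · intro hc
        apply h4
        have heq : (T.map σ.symm.toEmbedding).erase i
            = (T.erase (σ i)).map σ.symm.toEmbedding := by
          conv_lhs => rw [show i = σ.symm (σ i) by simp]
          exact map_erase_equiv n σ.symm T (σ i)
        rw [heq, hW' _] at hc
        exact hc
    · rintro ⟨S, ⟨h1, h2, h3, h4⟩, rfl⟩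
      refine ⟨by rw [Finset.card_map]; exact h1, ?_, (hW S).2 h3, ?_⟩
      · rw [Finset.mem_map_equiv]; simpa using h2
      · rw [map_erase_equiv n σ S i]
        intro hc
        exact h4 ((hW (S.erase i)).1 hc)
  rw [swingCountCard, swingCountCard, hset,
    Set.ncard_image_of_injective _ (Finset.map_injective σ.toEmbedding)]

lemma bipWinning_map (n1 n2 a b : ℕ) (σ : Equiv.Perm (Fin (n1 + n2)))
    (hσ : ∀ x : Fin (n1 + n2), ((σ x : ℕ) < n1 ↔ (x : ℕ) < n1)) (S : Finset (Fin (n1 + n2))) :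
    BipWinning n1 n2 a b (S.map σ.toEmbedding) ↔ BipWinning n1 n2 a b S := by
  unfold BipWinning
  rw [Finset.card_map]
  have hfil : ((S.map σ.toEmbedding).filter fun i : Fin (n1 + n2) => (i : ℕ) < n1)
      = (S.filter fun i : Fin (n1 + n2) => (i : ℕ) < n1).map σ.toEmbedding := by
    rw [Finset.map_filter]
    apply Finset.filter_congr
    intro x _
    have := hσ (σ.symm x)
    rw [Equiv.apply_symm_apply] at this
    simp only [Function.comp_apply]
    exact this
  rw [hfil, Finset.card_map]

lemma SSindex_same_type (n1 n2 a b : ℕ) (i i' : Fin (n1 + n2))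
    (h : (i : ℕ) < n1 ↔ (i' : ℕ) < n1) :
    SSindex (BipWinning n1 n2 a b) i = SSindex (BipWinning n1 n2 a b) i' := by
  have hσ : ∀ x : Fin (n1 + n2), ((Equiv.swap i i' x : ℕ) < n1 ↔ (x : ℕ) < n1) := by
    intro x
    rcases eq_or_ne x i with rfl | hxi
    · rw [Equiv.swap_apply_left]; exact h.symm
    · rcases eq_or_ne x i' with rfl | hxi'
      · rw [Equiv.swap_apply_right]; exact h
      · rw [Equiv.swap_apply_of_ne_of_ne hxi hxi']
  have key := fun s => swingCountCard_equiv (n1 + n2) (Equiv.swap i i')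
    (BipWinning n1 n2 a b) (bipWinning_map n1 n2 a b _ hσ) i s
  rw [Equiv.swap_apply_left] at key
  unfold SSindex
  exact (Finset.sum_congr rfl fun s _ => by rw [key s]).symm

lemma bip_mono (n1 n2 a b : ℕ) :
    ∀ (S : Finset (Fin (n1 + n2))) (k : Fin (n1 + n2)),
      BipWinning n1 n2 a b (S.erase k) → BipWinning n1 n2 a b S := by
  intro S k h
  obtain ⟨h1, h2⟩ := h
  constructor
  · exact le_trans h1 (Finset.card_le_card
      (Finset.filter_subset_filter _ (Finset.erase_subset k S)))
  · exact le_trans h2 (Finset.card_le_card (Finset.erase_subset k S))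

lemma eff_split (n1 n2 a b : ℕ) (hn2 : 1 ≤ n2) (ha : 1 ≤ a) (han : a ≤ n1) (hb : b ≤ n2 - 1)
    (i j : Fin (n1 + n2)) (hi : (i : ℕ) < n1) (hj : n1 ≤ (j : ℕ)) :
    (n1 : ℚ) * SSindex (BipWinning n1 n2 a b) i
      + (n2 : ℚ) * SSindex (BipWinning n1 n2 a b) j = 1 := by
  have hN : BipWinning n1 n2 a b univ := by
    constructor
    · rw [card_type1 n1 n2 hn2]; exact han
    · rw [Finset.card_univ, Fintype.card_fin]; omega
  have h0 : ¬ BipWinning n1 n2 a b ∅ := by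
    rintro ⟨-, h2⟩
    simp at h2
    omega
  have hsum := sum_SSindex_eq_one (n1 + n2) (BipWinning n1 n2 a b)
    (bip_mono n1 n2 a b) hN h0
  rw [← Finset.sum_filter_add_sum_filter_not univ
    (fun k : Fin (n1 + n2) => (k : ℕ) < n1)] at hsum
  have e1 : ∑ k ∈ univ.filter (fun k : Fin (n1 + n2) => (k : ℕ) < n1),
      SSindex (BipWinning n1 n2 a b) k
      = (n1 : ℚ) * SSindex (BipWinning n1 n2 a b) i := by
    rw [Finset.sum_congr rfl (fun k hk => SSindex_same_type n1 n2 a b k i (by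
      rw [Finset.mem_filter] at hk
      exact ⟨fun _ => hi, fun _ => hk.2⟩))]
    rw [Finset.sum_const, card_type1 n1 n2 hn2, nsmul_eq_mul]
  have e2 : ∑ k ∈ univ.filter (fun k : Fin (n1 + n2) => ¬ ((k : ℕ) < n1)),
      SSindex (BipWinning n1 n2 a b) k
      = (n2 : ℚ) * SSindex (BipWinning n1 n2 a b) j := by
    rw [Finset.sum_congr rfl (fun k hk => SSindex_same_type n1 n2 a b k j (by
      rw [Finset.mem_filter] at hk
      constructor
      · intro h; exact absurd h hk.2
      · intro h; omega))]
    rw [Finset.sum_const, card_type2 n1 n2 hn2, nsmul_eq_mul]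
  rw [e1, e2] at hsum
  exact hsum

theorem SS_index_comparison_of_games (n1 n2 m1 m2 m1' m2' : ℕ) (hn1 : 1 ≤ n1) (hn2 : 1 ≤ n2)
    (hm1 : 1 ≤ m1) (hm1n : m1 ≤ n1) (hm2 : m2 ≤ n2 - 1)
    (hm1' : 1 ≤ m1') (hm1n' : m1' ≤ n1) (hm2' : m2' ≤ n2 - 1)
    (hne : (m1, m2) ≠ (m1', m2'))
    (hge : m1' ≤ m1) (hle : m2 ≤ m2')
    (i j : Fin (n1 + n2)) (hi : (i : ℕ) < n1) (hj : n1 ≤ (j : ℕ)) :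
    (SSindex (BipWinning n1 n2 m1 m2) j ≤ SSindex (BipWinning n1 n2 m1' m2') j ∧
      (SSindex (BipWinning n1 n2 m1 m2) j = SSindex (BipWinning n1 n2 m1' m2') j ↔
        m2 = 0 ∧ m2' = 0)) ∧
    (SSindex (BipWinning n1 n2 m1' m2') i ≤ SSindex (BipWinning n1 n2 m1 m2) i ∧
      (SSindex (BipWinning n1 n2 m1 m2) i = SSindex (BipWinning n1 n2 m1' m2') i ↔
        m2 = 0 ∧ m2' = 0)) := by
  obtain ⟨hle2, hiff2⟩ := SS2_main n1 n2 m1 m2 m1' m2' hn1 hn2 hm1 hm1n hm2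
    hm1' hm1n' hm2' hne hge hle j hj
  have h1 := eff_split n1 n2 m1 m2 hn2 hm1 hm1n hm2 i j hi hj
  have h2 := eff_split n1 n2 m1' m2' hn2 hm1' hm1n' hm2' i j hi hj
  have hn1q : (0 : ℚ) < (n1 : ℚ) := by exact_mod_cast hn1
  have hn2q : (0 : ℚ) < (n2 : ℚ) := by exact_mod_cast hn2
  refine ⟨⟨hle2, hiff2⟩, ?_, ?_⟩
  · by_contra hc
    push_neg at hc
    have p1 := (mul_lt_mul_iff_right₀ hn1q).2 hc
    have p2 := mul_le_mul_of_nonneg_left hle2 hn2q.le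
    linarith
  · constructor
    · intro h
      apply hiff2.1
      have p1 : (n1 : ℚ) * SSindex (BipWinning n1 n2 m1 m2) i
          = (n1 : ℚ) * SSindex (BipWinning n1 n2 m1' m2') i := by rw [h]
      have p2 : (n2 : ℚ) * SSindex (BipWinning n1 n2 m1 m2) j
          = (n2 : ℚ) * SSindex (BipWinning n1 n2 m1' m2') j := by linarith
      exact mul_left_cancel₀ hn2q.ne' p2
    · intro hm
      have hx := hiff2.2 hm
      have p2 : (n1 : ℚ) * SSindex (BipWinning n1 n2 m1 m2) i
          = (n1 : ℚ) * SSindex (BipWinning n1 n2 m1' m2') i := by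
        rw [hx] at h1
        linarith
      exact mul_left_cancel₀ hn1q.ne' p2
end
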